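/- arXiv:math/0610406 — 5 statements merged into one kernel-verified Lean document; each statement's English description precedes it below -/
import Mathlib

section
/- Let W be a group, H ≤ W a subgroup, and let s_1,…,s_r ∈ W be elements with s_i^2 = 1 for all i. Define I = { i ∈ {1,…,r} : s_i ≠ 1 and s_1 s_2 ⋯ s_{i-1} s_i s_{i-1} ⋯ s_2 s_1 ∈ H }. Fix j ∈ I and define a new sequence by s'_i = s_i for i ≠ j and s'_j = 1. Then the analogously defined index set I' for (s'_1,…,s'_r) equals I \ {j}. -/
/-- The product `s 1 * s 2 * ⋯ * s n`. -/
def wordProd {G : Type*} [Monoid G] (s : ℕ → G) : ℕ → G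
  | 0 => 1
  | n + 1 => wordProd s n * s (n + 1)

/-- The product `s n * ⋯ * s 2 * s 1`. -/
def wordProdRev {G : Type*} [Monoid G] (s : ℕ → G) : ℕ → G
  | 0 => 1
  | n + 1 => s (n + 1) * wordProdRev s n

/-- The palindromic product `s 1 ⋯ s (i-1) * s i * s (i-1) ⋯ s 1` at index `i`. -/
def pal {G : Type*} [Monoid G] (s : ℕ → G) (i : ℕ) : G :=
  wordProd s (i - 1) * s i * wordProdRev s (i - 1)

/-- The index set of the sequence `s` (of length `r`) relative to the subgroup `H`:
those `i ∈ {1, …, r}` with `s i ≠ 1` whose palindromic product lies in `H`. -/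
def idxSet {G : Type*} [Group G] (H : Subgroup G) (r : ℕ) (s : ℕ → G) : Set ℕ :=
  {i | i ∈ Set.Icc 1 r ∧ s i ≠ 1 ∧ pal s i ∈ H}

/-!
For involutions the palindromic product at `i` is the conjugate `w s_i w⁻¹` of `s_i` by the
prefix `w = s_1 ⋯ s_{i-1}`. Deleting the letter at `j` leaves the prefixes before `j` alone and
multiplies every later prefix on the left by `s_1 ⋯ s_{j-1} (s_1 ⋯ s_j)⁻¹ = pal s j`. So the
palindromic products before `j` are unchanged, those after `j` are conjugated by `pal s j ∈ H`,
and membership in `H` is unchanged at every index other than `j`, where the letter is now `1`.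
-/

section Monoid

variable {G : Type*} [Monoid G]

theorem wordProd_congr {s t : ℕ → G} {n : ℕ} (h : ∀ k ≤ n, s k = t k) :
    wordProd s n = wordProd t n := by
  induction n with
  | zero => rfl
  | succ n ih => rw [wordProd, wordProd, ih fun k hk => h k (by omega), h (n + 1) le_rfl]

theorem wordProdRev_congr {s t : ℕ → G} {n : ℕ} (h : ∀ k ≤ n, s k = t k) :
    wordProdRev s n = wordProdRev t n := by
  induction n with
  | zero => rfl
  | succ n ih => rw [wordProdRev, wordProdRev, ih fun k hk => h k (by omega), h (n + 1) le_rfl]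

theorem pal_congr {s t : ℕ → G} {i : ℕ} (h : ∀ k ≤ i, s k = t k) : pal s i = pal t i := by
  have h' : ∀ k ≤ i - 1, s k = t k := fun k hk => h k (by omega)
  rw [pal, pal, wordProd_congr h', wordProdRev_congr h', h i le_rfl]

theorem pal_update_of_lt (s : ℕ → G) {i j : ℕ} (hij : i < j) (a : G) :
    pal (Function.update s j a) i = pal s i :=
  pal_congr fun _ hk => Function.update_of_ne (by omega) _ _

end Monoid

section Group

variable {G : Type*} [Group G]

theorem wordProdRev_eq_inv {s : ℕ → G} (hs : ∀ i, s i * s i = 1) (n : ℕ) :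
    wordProdRev s n = (wordProd s n)⁻¹ := by
  induction n with
  | zero => simp [wordProd, wordProdRev]
  | succ n ih => rw [wordProdRev, wordProd, ih, mul_inv_rev, inv_eq_of_mul_eq_one_left (hs _)]

theorem pal_eq_conj {s : ℕ → G} (hs : ∀ i, s i * s i = 1) (i : ℕ) :
    pal s i = wordProd s (i - 1) * s i * (wordProd s (i - 1))⁻¹ := by
  rw [pal, wordProdRev_eq_inv hs]

theorem wordProd_update_one_of_le (s : ℕ → G) {j n : ℕ} (hjn : j ≤ n) :
    wordProd (Function.update s j 1) n = wordProd s (j - 1) * (wordProd s j)⁻¹ * wordProd s n := by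
  induction n, hjn using Nat.le_induction with
  | base =>
    cases j with
    | zero => simp [wordProd]
    | succ k =>
      have hpre : wordProd (Function.update s (k + 1) 1) k = wordProd s k :=
        wordProd_congr fun _ hm => Function.update_of_ne (by omega) _ _
      simp only [wordProd, hpre, Function.update_self, mul_one, Nat.add_sub_cancel]
      group
  | succ n hjn ih =>
    rw [wordProd, wordProd, ih, Function.update_of_ne (by omega), mul_assoc _ (wordProd s n)]

theorem wordProd_update_one_eq_pal_mul {s : ℕ → G} (hs : ∀ i, s i * s i = 1) {j n : ℕ}
    (hj : 1 ≤ j) (hjn : j ≤ n) :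
    wordProd (Function.update s j 1) n = pal s j * wordProd s n := by
  obtain ⟨k, rfl⟩ : ∃ k, j = k + 1 := ⟨j - 1, by omega⟩
  rw [wordProd_update_one_of_le s hjn, pal_eq_conj hs, Nat.add_sub_cancel, wordProd, mul_inv_rev,
    inv_eq_of_mul_eq_one_left (hs _)]
  group

theorem update_one_mul_self {s : ℕ → G} (hs : ∀ i, s i * s i = 1) (j i : ℕ) :
    Function.update s j 1 i * Function.update s j 1 i = 1 := by
  rcases eq_or_ne i j with rfl | h
  · simp
  · rw [Function.update_of_ne h, hs]

theorem pal_update_one_of_gt {s : ℕ → G} (hs : ∀ i, s i * s i = 1) {i j : ℕ} (hj : 1 ≤ j)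
    (hji : j < i) :
    pal (Function.update s j 1) i = pal s j * pal s i * (pal s j)⁻¹ := by
  rw [pal_eq_conj (update_one_mul_self hs j), Function.update_of_ne (by omega),
    wordProd_update_one_eq_pal_mul hs hj (by omega), pal_eq_conj hs i]
  group

end Group

/-- Lemma 5.3: replacing the letter at a position `j` of the index set by `1`
removes exactly `j` from the index set. -/
theorem idxSet_update_eq_sdiff
    {W : Type*} [Group W] (H : Subgroup W) (r : ℕ) (s : ℕ → W)
    (hs : ∀ i, s i * s i = 1) (j : ℕ) (hj : j ∈ idxSet H r s) :
    idxSet H r (Function.update s j 1) = idxSet H r s \ {j} := by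
  obtain ⟨⟨hj1, -⟩, -, hjH⟩ := hj
  have hpal : ∀ i ≠ j, pal (Function.update s j 1) i ∈ H ↔ pal s i ∈ H := by
    intro i hij
    rcases lt_or_gt_of_ne hij with hlt | hgt
    · rw [pal_update_of_lt s hlt]
    · rw [pal_update_one_of_gt hs hj1 hgt, H.mul_mem_cancel_right (H.inv_mem hjH),
        H.mul_mem_cancel_left hjH]
  ext i
  simp only [idxSet, Set.mem_ofPred_eq, Set.mem_sdiff, Set.mem_singleton_iff]
  rcases eq_or_ne i j with rfl | hij
  · simp
  · rw [Function.update_of_ne hij, hpal i hij]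
    tauto
end

section
/- Let c be a linear automorphism of the ambient vector space with c(Φ) = Φ and c(Φ⁺) = Φ⁺, and let ω ∈ W be such that ω^{-1}(Ψ⁺) ⊆ Φ⁺. If the composite map ωc satisfies (ωc)(Ψ) = Ψ, then (ωc)(Ψ⁺) = Ψ⁺. -/
/-
Write `g = ω c'`. Since `c'` fixes `Φ⁺` and `ω⁻¹` maps `Ψ⁺` into `Φ⁺`, every element of `Ψ⁺` is
the image under `g` of an element of `Φ⁺`; as `g(Ψ) = Ψ`, it is even the image of an element of
`Ψ ∩ Φ⁺ = Ψ⁺`. So `Ψ⁺ ⊆ g(Ψ⁺)`, and an injective map cannot enlarge a finite set.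
-/

open scoped BigOperators

/-- `g` is the reflection in the root `α`, with respect to the coroot assignment `c`:
`g x = x - ⟨x, α∨⟩ α` for all `x`. -/
def IsReflection {V : Type*} [AddCommGroup V] [Module ℝ V]
    (c : V → Module.Dual ℝ V) (α : V) (g : V ≃ₗ[ℝ] V) : Prop :=
  ∀ x : V, g x = x - c α x • α

/-- The subgroup of `GL(V)` generated by the reflections in the elements of `Ψ`. -/
def reflSubgroup {V : Type*} [AddCommGroup V] [Module ℝ V]
    (c : V → Module.Dual ℝ V) (Ψ : Set V) : Subgroup (V ≃ₗ[ℝ] V) :=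
  Subgroup.closure {g | ∃ α ∈ Ψ, IsReflection c α g}

/-- The number of elements `α` of `A` such that `w α` is a negative root,
i.e. `-(w α)` lies in the positive system `pos`. -/
noncomputable def invCount {V : Type*} [AddCommGroup V] [Module ℝ V]
    (pos A : Set V) (w : V ≃ₗ[ℝ] V) : ℕ :=
  Set.ncard {α | α ∈ A ∧ -(w α) ∈ pos}

open Set

theorem Set.Finite.image_eq_of_subset_image {α : Type*} {f : α → α} {s : Set α}
    (hs : s.Finite) (hf : InjOn f s) (h : s ⊆ f '' s) : f '' s = s :=
  (eq_of_subset_of_ncard_le h hf.ncard_image.le (hs.image f)).symm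

theorem omega_c_preserves_positive_subsystem_general
    {V : Type*} [AddCommGroup V] [Module ℝ V]
    (Φ : Set V) (pos Ψ : Set V)
    (hΦfin : Φ.Finite)
    (hΨΦ : Ψ ⊆ Φ)
    (c' : V ≃ₗ[ℝ] V) (hc'pos : (⇑c') '' pos = pos)
    (ω : V ≃ₗ[ℝ] V)
    (hωpos : (⇑ω⁻¹) '' (Ψ ∩ pos) ⊆ pos)
    (hstab : (⇑(ω * c')) '' Ψ = Ψ) :
    (⇑(ω * c')) '' (Ψ ∩ pos) = Ψ ∩ pos := by
  have hposΨ : Ψ ∩ pos ⊆ ⇑(ω * c') '' pos := by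
    rw [show ⇑(ω * c') = ω ∘ c' from rfl, image_comp, hc'pos]
    exact (ω.toEquiv.symm_image_subset _ _).1 hωpos
  have hsub : Ψ ∩ pos ⊆ ⇑(ω * c') '' (Ψ ∩ pos) := by
    rw [image_inter (ω * c').injective, hstab]
    exact subset_inter inter_subset_left hposΨ
  exact (hΦfin.subset (inter_subset_left.trans hΨΦ)).image_eq_of_subset_image
    (ω * c').injective.injOn hsub

/-- Lemma 5.8: if `c'` is a linear automorphism preserving `Φ` and `Φ⁺`, and `ω ∈ W`
satisfies `ω⁻¹(Ψ⁺) ⊆ Φ⁺`, then `(ω c')(Ψ) = Ψ` implies `(ω c')(Ψ⁺) = Ψ⁺`. -/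
theorem omega_c_preserves_positive_subsystem
    {V : Type*} [AddCommGroup V] [Module ℝ V]
    (Φ : Set V) (c : V → Module.Dual ℝ V) (pos Ψ : Set V)
    (hΦfin : Φ.Finite) (hΦ0 : (0 : V) ∉ Φ)
    (hc2 : ∀ α ∈ Φ, c α α = 2)
    (hΦrefl : ∀ α ∈ Φ, ∀ β ∈ Φ, β - c α β • α ∈ Φ)
    (hcrys : ∀ α ∈ Φ, ∀ β ∈ Φ, ∃ n : ℤ, c α β = (n : ℝ))
    (hposΦ : pos ⊆ Φ)
    (hpos : ∀ α ∈ Φ, (α ∈ pos ↔ -α ∉ pos))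
    (hposadd : ∀ α ∈ pos, ∀ β ∈ pos, α + β ∈ Φ → α + β ∈ pos)
    (hΨΦ : Ψ ⊆ Φ) (hΨsymm : ∀ α ∈ Ψ, -α ∈ Ψ)
    (hΨrefl : ∀ α ∈ Ψ, ∀ β ∈ Ψ, β - c α β • α ∈ Ψ)
    (c' : V ≃ₗ[ℝ] V) (hc'Φ : (⇑c') '' Φ = Φ) (hc'pos : (⇑c') '' pos = pos)
    (ω : V ≃ₗ[ℝ] V) (hω : ω ∈ reflSubgroup c Φ)
    (hωpos : (⇑ω⁻¹) '' (Ψ ∩ pos) ⊆ pos)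
    (hstab : (⇑(ω * c')) '' Ψ = Ψ) :
    (⇑(ω * c')) '' (Ψ ∩ pos) = Ψ ∩ pos :=
  omega_c_preserves_positive_subsystem_general Φ pos Ψ hΦfin hΨΦ c' hc'pos ω hωpos hstab
end

section
/- Let W' = { w ∈ W : w(Ψ) = Ψ } and W'⁰ = { w ∈ W' : w(Ψ⁺) = Ψ⁺ }. Then W_Ψ is a normal subgroup of W', the intersection W'⁰ ∩ W_Ψ is trivial, and every element w ∈ W' can be written uniquely as w = x·y with x ∈ W'⁰ and y ∈ W_Ψ; that is, W' is the semidirect product of W'⁰ and the normal subgroup W_Ψ. -/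
open scoped BigOperators

/-!
`Ψ` is itself a crystallographic root system, with positive system `Ψ⁺ = Ψ ∩ Φ⁺`, and `W_Ψ`
is normalised by every `w ∈ W` with `w(Ψ) = Ψ` because `w s_β w⁻¹ = s_{wβ}`. Everything else
is the classical fact that the Weyl group of a root system acts simply transitively on its
positive systems, applied to `Ψ` with the positive systems `Ψ⁺` and `w⁻¹(Ψ⁺)`.

Transitivity: if `P ⊄ Q`, some simple root `δ` of `P` lies outside `Q`, and `s_δ(Q)` disagrees
with `P` on fewer roots. Freeness: `W` is generated by the simple reflections of `P`, and a word
in them mapping `P` into `P` contains a letter that cancels against its last letter (the deletion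
condition). The `W`-invariant form `B(x, y) = ∑_{α ∈ Φ} ⟨x, α∨⟩ ⟨y, α∨⟩` controls the signs of
the pairings, which are integers; with it, two positive roots pairing positively differ by a root,
and no nonempty sum of positive roots vanishes.
-/

open scoped Pointwise

section RootSystems

open Set

variable {V : Type*} [AddCommGroup V]

structure IsPositiveSystem (Φ pos : Set V) : Prop where
  subset : pos ⊆ Φ
  mem_iff_neg_notMem : ∀ α ∈ Φ, α ∈ pos ↔ -α ∉ pos
  add_mem : ∀ α ∈ pos, ∀ β ∈ pos, α + β ∈ Φ → α + β ∈ pos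

def simpleRoots (pos : Set V) : Set V := {δ | δ ∈ pos ∧ ¬∃ α ∈ pos, ∃ β ∈ pos, δ = α + β}

namespace IsPositiveSystem

variable {Φ pos : Set V}

theorem neg_notMem (hP : IsPositiveSystem Φ pos) {α : V} (hα : α ∈ pos) : -α ∉ pos :=
  (hP.mem_iff_neg_notMem α (hP.subset hα)).1 hα

theorem neg_mem_of_notMem (hP : IsPositiveSystem Φ pos) {α : V} (hα : -α ∈ Φ) (h : α ∉ pos) :
    -α ∈ pos :=
  (hP.mem_iff_neg_notMem _ hα).2 (by rwa [neg_neg])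

theorem inter (hP : IsPositiveSystem Φ pos) {Ψ : Set V} (hΨΦ : Ψ ⊆ Φ)
    (hneg : ∀ α ∈ Ψ, -α ∈ Ψ) : IsPositiveSystem Ψ (Ψ ∩ pos) where
  subset := inter_subset_left
  mem_iff_neg_notMem α hα := by
    simp only [mem_inter_iff, hα, hneg α hα, true_and]
    exact hP.mem_iff_neg_notMem α (hΨΦ hα)
  add_mem α hα β hβ hαβ := ⟨hαβ, hP.add_mem α hα.2 β hβ.2 (hΨΦ hαβ)⟩

end IsPositiveSystem

variable [Module ℝ V] {c : V → Module.Dual ℝ V}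

-- Taken to be `1` off `{α | c α α = 2}`, so that words in arbitrary vectors make sense.
noncomputable def rootReflection (c : V → Module.Dual ℝ V) (α : V) : V ≃ₗ[ℝ] V :=
  if h : c α α = 2 then Module.reflection h else 1

theorem rootReflection_eq {α : V} (h : c α α = 2) : rootReflection c α = Module.reflection h :=
  dif_pos h

theorem rootReflection_apply {α : V} (h : c α α = 2) (x : V) :
    rootReflection c α x = x - c α x • α := by
  rw [rootReflection_eq h, Module.reflection_apply]

theorem rootReflection_mul_self (α : V) : rootReflection c α * rootReflection c α = 1 := by
  by_cases h : c α α = 2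
  · rw [rootReflection_eq h]
    exact LinearEquiv.ext (Module.involutive_reflection h)
  · rw [rootReflection, dif_neg h, mul_one]

theorem rootReflection_inv (α : V) : (rootReflection c α)⁻¹ = rootReflection c α :=
  inv_eq_of_mul_eq_one_right (rootReflection_mul_self α)

theorem rootReflection_rootReflection (α x : V) :
    rootReflection c α (rootReflection c α x) = x :=
  LinearEquiv.congr_fun (rootReflection_mul_self α) x

theorem IsReflection.eq_rootReflection {α : V} {g : V ≃ₗ[ℝ] V} (hg : IsReflection c α g)
    (h : c α α = 2) : g = rootReflection c α :=
  LinearEquiv.ext fun x => (hg x).trans (rootReflection_apply h x).symm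

theorem reflSubgroup_mono {S T : Set V} (hST : S ⊆ T) : reflSubgroup c S ≤ reflSubgroup c T :=
  Subgroup.closure_mono fun _ ⟨α, hα, hg⟩ => ⟨α, hST hα, hg⟩

theorem reflSubgroup_eq_closure {S : Set V} (h : ∀ α ∈ S, c α α = 2) :
    reflSubgroup c S = Subgroup.closure (rootReflection c '' S) := by
  refine congrArg Subgroup.closure (Set.ext fun g => ⟨?_, ?_⟩)
  · rintro ⟨α, hα, hg⟩
    exact ⟨α, hα, (hg.eq_rootReflection (h α hα)).symm⟩
  · rintro ⟨α, hα, rfl⟩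
    exact ⟨α, hα, fun x => rootReflection_apply (h α hα) x⟩

theorem rootReflection_mem_reflSubgroup {S : Set V} {α : V} (hα : α ∈ S) (h : c α α = 2) :
    rootReflection c α ∈ reflSubgroup c S :=
  Subgroup.subset_closure ⟨α, hα, fun x => rootReflection_apply h x⟩

theorem mem_stabilizer_iff_image_eq {w : V ≃ₗ[ℝ] V} {s : Set V} :
    w ∈ MulAction.stabilizer (V ≃ₗ[ℝ] V) s ↔ ⇑w '' s = s := by
  rw [MulAction.mem_stabilizer_iff, ← Set.image_smul]; rfl

noncomputable def reflProd (c : V → Module.Dual ℝ V) (L : List V) : V ≃ₗ[ℝ] V :=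
  (L.map (rootReflection c)).prod

@[simp] theorem reflProd_nil : reflProd c [] = 1 := rfl

@[simp] theorem reflProd_cons (α : V) (L : List V) :
    reflProd c (α :: L) = rootReflection c α * reflProd c L := by
  simp [reflProd]

@[simp] theorem reflProd_append (L M : List V) :
    reflProd c (L ++ M) = reflProd c L * reflProd c M := by
  simp [reflProd]

theorem reflProd_reverse (L : List V) : reflProd c L.reverse = (reflProd c L)⁻¹ := by
  induction L with
  | nil => simp
  | cons α L ih =>
    rw [List.reverse_cons, reflProd_append, ih, reflProd_cons, reflProd_cons, reflProd_nil,
      mul_one, mul_inv_rev, rootReflection_inv]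

theorem exists_reflProd_eq {S : Set V} (h : ∀ α ∈ S, c α α = 2) {w : V ≃ₗ[ℝ] V}
    (hw : w ∈ reflSubgroup c S) : ∃ L : List V, (∀ α ∈ L, α ∈ S) ∧ reflProd c L = w := by
  rw [reflSubgroup_eq_closure h] at hw
  induction hw using Subgroup.closure_induction with
  | mem g hg =>
    obtain ⟨α, hα, rfl⟩ := hg
    exact ⟨[α], by simpa using hα, by simp⟩
  | one => exact ⟨[], by simp, rfl⟩
  | mul g g' _ _ ih ih' =>
    obtain ⟨L, hL, rfl⟩ := ih
    obtain ⟨L', hL', rfl⟩ := ih'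
    exact ⟨L ++ L', by simpa [or_imp, forall_and] using ⟨hL, hL'⟩, reflProd_append L L'⟩
  | inv g _ ih =>
    obtain ⟨L, hL, rfl⟩ := ih
    exact ⟨L.reverse, by simpa using hL, reflProd_reverse L⟩

theorem exists_append_cons_of_not_mem {p : Set V} {γ : V} (hγ : γ ∈ p) :
    ∀ L : List V, reflProd c L γ ∉ p → ∃ A δ B, L = A ++ δ :: B ∧
      reflProd c B γ ∈ p ∧ rootReflection c δ (reflProd c B γ) ∉ p
  | [], h => absurd hγ h
  | δ :: L, h => by
    by_cases hL : reflProd c L γ ∈ p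
    · exact ⟨[], δ, L, rfl, hL, h⟩
    · obtain ⟨A, δ', B, rfl, hB, hδ'⟩ := exists_append_cons_of_not_mem hγ L hL
      exact ⟨δ :: A, δ', B, rfl, hB, hδ'⟩

theorem reflProd_mem_reflSubgroup {S : Set V} (h : ∀ α ∈ S, c α α = 2) {L : List V}
    (hL : ∀ α ∈ L, α ∈ S) : reflProd c L ∈ reflSubgroup c S :=
  Subgroup.list_prod_mem _ <| by
    simpa using fun α hα => rootReflection_mem_reflSubgroup (hL α hα) (h α (hL α hα))

structure IsRootSystem (c : V → Module.Dual ℝ V) (Φ : Set V) : Prop where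
  finite : Φ.Finite
  zero_notMem : (0 : V) ∉ Φ
  apply_self : ∀ α ∈ Φ, c α α = 2
  sub_smul_mem : ∀ α ∈ Φ, ∀ β ∈ Φ, β - c α β • α ∈ Φ
  exists_int : ∀ α ∈ Φ, ∀ β ∈ Φ, ∃ n : ℤ, c α β = n
  apply_apply : ∀ w ∈ reflSubgroup c Φ, ∀ α ∈ Φ, ∀ x : V, c (w α) x = c α (w⁻¹ x)

namespace IsRootSystem

variable {Φ : Set V} (hΦ : IsRootSystem c Φ)

noncomputable def rootForm : LinearMap.BilinForm ℝ V :=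
  ∑ α ∈ hΦ.finite.toFinset, (LinearMap.mul ℝ ℝ).compl₁₂ (c α) (c α)

include hΦ

theorem rootReflection_apply' {α : V} (hα : α ∈ Φ) (x : V) :
    rootReflection c α x = x - c α x • α :=
  rootReflection_apply (hΦ.apply_self α hα) x

theorem rootReflection_apply_self {α : V} (hα : α ∈ Φ) : rootReflection c α α = -α := by
  rw [rootReflection_eq (hΦ.apply_self α hα), Module.reflection_apply_self]

theorem neg_mem {α : V} (hα : α ∈ Φ) : -α ∈ Φ := by
  simpa only [← hΦ.rootReflection_apply' hα, hΦ.rootReflection_apply_self hα] using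
    hΦ.sub_smul_mem α hα α hα

theorem ne_zero {α : V} (hα : α ∈ Φ) : α ≠ 0 := fun h => hΦ.zero_notMem (h ▸ hα)

theorem rootReflection_mem {α : V} (hα : α ∈ Φ) : rootReflection c α ∈ reflSubgroup c Φ :=
  rootReflection_mem_reflSubgroup hα (hΦ.apply_self α hα)

theorem image_eq {w : V ≃ₗ[ℝ] V} (hw : w ∈ reflSubgroup c Φ) : ⇑w '' Φ = Φ := by
  suffices reflSubgroup c Φ ≤ MulAction.stabilizer (V ≃ₗ[ℝ] V) Φ from
    mem_stabilizer_iff_image_eq.1 (this hw)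
  rw [reflSubgroup_eq_closure hΦ.apply_self, Subgroup.closure_le]
  rintro _ ⟨α, hα, rfl⟩
  rw [SetLike.mem_coe, mem_stabilizer_iff_image_eq, rootReflection_eq (hΦ.apply_self α hα)]
  refine (Module.bijOn_reflection_of_mapsTo _ fun β hβ => ?_).image_eq
  rw [Module.reflection_apply]
  exact hΦ.sub_smul_mem α hα β hβ

theorem apply_mem {w : V ≃ₗ[ℝ] V} (hw : w ∈ reflSubgroup c Φ) {α : V} (hα : α ∈ Φ) : w α ∈ Φ :=
  hΦ.image_eq hw ▸ mem_image_of_mem w hα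

theorem mul_rootReflection_mul_inv {w : V ≃ₗ[ℝ] V} (hw : w ∈ reflSubgroup c Φ) {α : V}
    (hα : α ∈ Φ) : w * rootReflection c α * w⁻¹ = rootReflection c (w α) := by
  refine LinearEquiv.ext fun x => ?_
  simp only [LinearEquiv.mul_apply, hΦ.rootReflection_apply' hα,
    hΦ.rootReflection_apply' (hΦ.apply_mem hw hα), map_sub, map_smul, hΦ.apply_apply w hw α hα]
  rw [← LinearEquiv.mul_apply, mul_inv_cancel]; rfl

theorem of_subset {Ψ : Set V} (hΨΦ : Ψ ⊆ Φ) (hΨ : ∀ α ∈ Ψ, ∀ β ∈ Ψ, β - c α β • α ∈ Ψ) :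
    IsRootSystem c Ψ where
  finite := hΦ.finite.subset hΨΦ
  zero_notMem h := hΦ.zero_notMem (hΨΦ h)
  apply_self α hα := hΦ.apply_self α (hΨΦ hα)
  sub_smul_mem := hΨ
  exists_int α hα β hβ := hΦ.exists_int α (hΨΦ hα) β (hΨΦ hβ)
  apply_apply w hw α hα := hΦ.apply_apply w (reflSubgroup_mono hΨΦ hw) α (hΨΦ hα)

theorem mul_mul_inv_mem_reflSubgroup {Ψ : Set V} (hΨΦ : Ψ ⊆ Φ) {w : V ≃ₗ[ℝ] V}
    (hw : w ∈ reflSubgroup c Φ) (hwΨ : MapsTo w Ψ Ψ) {x : V ≃ₗ[ℝ] V}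
    (hx : x ∈ reflSubgroup c Ψ) : w * x * w⁻¹ ∈ reflSubgroup c Ψ := by
  suffices reflSubgroup c Ψ ≤ (reflSubgroup c Ψ).comap (MulAut.conj w).toMonoidHom from this hx
  rw [reflSubgroup_eq_closure fun α hα => hΦ.apply_self α (hΨΦ hα), Subgroup.closure_le]
  rintro _ ⟨β, hβ, rfl⟩
  change w * rootReflection c β * w⁻¹ ∈ Subgroup.closure (rootReflection c '' Ψ)
  rw [hΦ.mul_rootReflection_mul_inv hw (hΨΦ hβ)]
  exact Subgroup.subset_closure ⟨w β, hwΨ hβ, rfl⟩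

theorem rootForm_apply (x y : V) :
    hΦ.rootForm x y = ∑ α ∈ hΦ.finite.toFinset, c α x * c α y := by
  simp [rootForm, LinearMap.sum_apply]

theorem rootForm_comm (x y : V) : hΦ.rootForm x y = hΦ.rootForm y x := by
  simp only [rootForm_apply, mul_comm]

theorem rootForm_self_nonneg (x : V) : 0 ≤ hΦ.rootForm x x := by
  rw [rootForm_apply]
  exact Finset.sum_nonneg fun α _ => mul_self_nonneg _

theorem rootForm_self_pos {α : V} (hα : α ∈ Φ) : 0 < hΦ.rootForm α α := by
  rw [rootForm_apply]
  refine lt_of_lt_of_le ?_ (Finset.single_le_sum (f := fun β => c β α * c β α)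
    (fun β _ => mul_self_nonneg _) (hΦ.finite.mem_toFinset.2 hα))
  simp [hΦ.apply_self α hα]

theorem rootForm_apply_apply {w : V ≃ₗ[ℝ] V} (hw : w ∈ reflSubgroup c Φ) (x y : V) :
    hΦ.rootForm (w x) (w y) = hΦ.rootForm x y := by
  have hw' := inv_mem hw
  simp only [rootForm_apply]
  refine Finset.sum_nbij' (⇑w⁻¹) ⇑w (fun α hα => ?_) (fun α hα => ?_) (fun α _ => ?_)
    (fun α _ => ?_) (fun α hα => ?_)
  · simp only [Set.Finite.mem_toFinset] at hα ⊢; exact hΦ.apply_mem hw' hα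
  · simp only [Set.Finite.mem_toFinset] at hα ⊢; exact hΦ.apply_mem hw hα
  · exact w.apply_symm_apply α
  · exact w.symm_apply_apply α
  · rw [Set.Finite.mem_toFinset] at hα
    simp only [hΦ.apply_apply _ hw' α hα, inv_inv]

theorem coroot_mul_rootForm_self {β : V} (hβ : β ∈ Φ) (x : V) :
    c β x * hΦ.rootForm β β = 2 * hΦ.rootForm x β := by
  have h := hΦ.rootForm_apply_apply (hΦ.rootReflection_mem hβ) x β
  rw [hΦ.rootReflection_apply_self hβ, hΦ.rootReflection_apply' hβ] at h
  simp only [map_neg, map_sub, map_smul, LinearMap.sub_apply, LinearMap.smul_apply,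
    smul_eq_mul] at h
  linarith

theorem coroot_pos_iff {β : V} (hβ : β ∈ Φ) (x : V) : 0 < c β x ↔ 0 < hΦ.rootForm x β := by
  have h := hΦ.coroot_mul_rootForm_self hβ x
  have hpos := hΦ.rootForm_self_pos hβ
  constructor <;> intro h' <;> nlinarith

theorem rootReflection_smul {α : V} (hα : α ∈ Φ) {t : ℝ} (ht : t • α ∈ Φ) :
    rootReflection c (t • α) = rootReflection c α := by
  have ht0 : t ≠ 0 := by rintro rfl; exact hΦ.zero_notMem (by simpa using ht)
  refine LinearEquiv.ext fun x => ?_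
  have h := hΦ.coroot_mul_rootForm_self ht x
  have h' := hΦ.coroot_mul_rootForm_self hα x
  have hpos := hΦ.rootForm_self_pos hα
  simp only [map_smul, LinearMap.smul_apply, smul_eq_mul] at h
  have : c (t • α) x * t = c α x := by
    apply mul_left_cancel₀ (mul_ne_zero ht0 hpos.ne')
    linear_combination h - t * h'
  rw [hΦ.rootReflection_apply' ht, hΦ.rootReflection_apply' hα, smul_smul, this]

theorem rootReflection_neg {α : V} (hα : α ∈ Φ) :
    rootReflection c (-α) = rootReflection c α := by
  simpa using hΦ.rootReflection_smul hα (t := -1) (by simpa using hΦ.neg_mem hα)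

theorem exists_nat_of_coroot_pos {α β : V} (hα : α ∈ Φ) (hβ : β ∈ Φ) (h : 0 < c α β) :
    ∃ n : ℕ, 0 < n ∧ c α β = n := by
  obtain ⟨n, hn⟩ := hΦ.exists_int α hα β hβ
  have hn0 : 0 < n := by exact_mod_cast hn ▸ h
  lift n to ℕ using hn0.le
  exact ⟨n, by exact_mod_cast hn0, by exact_mod_cast hn⟩

theorem sub_mem_of_rootForm_pos {α β : V} (hα : α ∈ Φ) (hβ : β ∈ Φ)
    (h : 0 < hΦ.rootForm α β) (hne : α ≠ β) : α - β ∈ Φ := by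
  obtain ⟨m, hm0, hm⟩ := hΦ.exists_nat_of_coroot_pos hβ hα ((hΦ.coroot_pos_iff hβ α).2 h)
  obtain ⟨n, hn0, hn⟩ := hΦ.exists_nat_of_coroot_pos hα hβ
    ((hΦ.coroot_pos_iff hα β).2 (hΦ.rootForm_comm α β ▸ h))
  have hmn : m * n ≤ 4 := by
    have e1 := hΦ.coroot_mul_rootForm_self hβ α
    have e2 := hΦ.coroot_mul_rootForm_self hα β
    have hcs := hΦ.rootForm.apply_mul_apply_le_of_forall_zero_le hΦ.rootForm_self_nonneg α β
    have hαα := hΦ.rootForm_self_pos hα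
    have hββ := hΦ.rootForm_self_pos hβ
    rw [hm] at e1
    rw [hn] at e2
    have : (m * n : ℝ) * (hΦ.rootForm α α * hΦ.rootForm β β) ≤
        4 * (hΦ.rootForm α α * hΦ.rootForm β β) := by
      calc (m * n : ℝ) * (hΦ.rootForm α α * hΦ.rootForm β β)
          = (m * hΦ.rootForm β β) * (n * hΦ.rootForm α α) := by ring
        _ = 4 * (hΦ.rootForm α β * hΦ.rootForm β α) := by rw [e1, e2]; ring
        _ ≤ 4 * (hΦ.rootForm α α * hΦ.rootForm β β) := by linarith
    exact_mod_cast le_of_mul_le_mul_right this (by positivity)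
  by_cases hm1 : m = 1
  · simpa [hm, hm1] using hΦ.sub_smul_mem β hβ α hα
  by_cases hn1 : n = 1
  · simpa [hn, hn1] using hΦ.neg_mem (hΦ.sub_smul_mem α hα β hβ)
  obtain ⟨hm2, hn2⟩ : m = 2 ∧ n = 2 := by
    have h2m : 2 ≤ m := by omega
    have h2n : 2 ≤ n := by omega
    have := Nat.mul_le_mul_left m h2n
    have := Nat.mul_le_mul_right n h2m
    omega
  -- pairings `(2, 2)` force `α = β`: otherwise `s_α s_β` has infinite order on the finite `Φ`
  have := IsAddTorsionFree.of_isTorsionFree ℝ V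
  refine absurd (Module.eq_of_mapsTo_reflection_of_mem hΦ.finite (hΦ.apply_self α hα)
    (hΦ.apply_self β hβ) (by simp [hm, hm2]) (by simp [hn, hn2]) ?_ ?_ hβ) hne
  · exact fun γ hγ => by simpa [Module.preReflection_apply] using hΦ.sub_smul_mem α hα γ hγ
  · exact fun γ hγ => by simpa [Module.preReflection_apply] using hΦ.sub_smul_mem β hβ γ hγ

theorem add_mem_of_rootForm_neg {α β : V} (hα : α ∈ Φ) (hβ : β ∈ Φ)
    (h : hΦ.rootForm α β < 0) (hne : α ≠ -β) : α + β ∈ Φ := by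
  simpa using hΦ.sub_mem_of_rootForm_pos hα (hΦ.neg_mem hβ) (by simpa using h) hne

end IsRootSystem

namespace IsPositiveSystem

variable {Φ pos : Set V}

theorem preimage (hP : IsPositiveSystem Φ pos) {g : V ≃ₗ[ℝ] V} (hg : ⇑g '' Φ = Φ) :
    IsPositiveSystem Φ (g ⁻¹' pos) := by
  have hmem : ∀ α, g α ∈ Φ ↔ α ∈ Φ := fun α => by
    simpa only [hg] using g.injective.mem_set_image (a := α) (s := Φ)
  refine ⟨fun α hα => (hmem α).1 (hP.subset hα), fun α hα => ?_, fun α hα β hβ hαβ => ?_⟩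
  · simpa using hP.mem_iff_neg_notMem (g α) ((hmem α).2 hα)
  · simpa using hP.add_mem _ hα _ hβ (by simpa using (hmem _).2 hαβ)

variable (hΦ : IsRootSystem c Φ) (hP : IsPositiveSystem Φ pos)
include hΦ hP

theorem multiset_sum_ne_zero (S : Multiset V) (hS : ∀ x ∈ S, x ∈ pos) (h0 : S ≠ 0) :
    S.sum ≠ 0 := by
  classical
  induction hn : Multiset.card S using Nat.strong_induction_on generalizing S with
  | _ n ih =>
  intro hsum
  obtain ⟨x, hx⟩ := Multiset.exists_mem_of_ne_zero h0
  set T := S.erase x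
  have hxT : x + T.sum = 0 := by rw [← Multiset.sum_cons, Multiset.cons_erase hx, hsum]
  -- since `B(x, T.sum) = -B(x, x) < 0`, some `y ∈ T` pairs negatively with `x`; then `x + y` is a
  -- positive root and replacing `x, y` by it shortens `S` without changing its sum
  obtain ⟨y, hyT, hxy⟩ : ∃ y ∈ T, hΦ.rootForm x y < 0 := by
    by_contra! hT
    have h1 : 0 ≤ hΦ.rootForm x T.sum := by
      rw [map_multiset_sum]
      exact Multiset.sum_nonneg (by simpa using hT)
    rw [eq_neg_of_add_eq_zero_right hxT, map_neg] at h1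
    linarith [hΦ.rootForm_self_pos (hP.subset (hS x hx))]
  have hy : y ∈ S := Multiset.mem_of_mem_erase hyT
  have hxy_pos : x + y ∈ pos := hP.add_mem x (hS x hx) y (hS y hy) <|
    hΦ.add_mem_of_rootForm_neg (hP.subset (hS x hx)) (hP.subset (hS y hy)) hxy
      fun h => hP.neg_notMem (hS y hy) (h ▸ hS x hx)
  have hcardT : Multiset.card T + 1 = n := by
    rw [← hn, ← Multiset.card_cons, Multiset.cons_erase hx]
  have hcardTy : Multiset.card (T.erase y) + 1 = Multiset.card T := by
    rw [← Multiset.card_cons, Multiset.cons_erase hyT]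
  refine ih (n - 1) (by omega) ((x + y) ::ₘ T.erase y) ?_ Multiset.cons_ne_zero ?_ ?_
  · intro z hz
    rcases Multiset.mem_cons.1 hz with rfl | hz
    exacts [hxy_pos, hS z (Multiset.mem_of_mem_erase (Multiset.mem_of_mem_erase hz))]
  · rw [Multiset.card_cons]; omega
  · rw [Multiset.sum_cons, add_assoc, ← Multiset.sum_cons, Multiset.cons_erase hyT, hxT]

theorem eq_zero_of_mem_closure_of_neg_mem {x : V} (hx : x ∈ AddSubmonoid.closure pos)
    (hx' : -x ∈ AddSubmonoid.closure pos) : x = 0 := by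
  obtain ⟨S, hS, rfl⟩ := AddSubmonoid.exists_multiset_of_mem_closure hx
  obtain ⟨T, hT, hTsum⟩ := AddSubmonoid.exists_multiset_of_mem_closure hx'
  by_contra h
  refine hP.multiset_sum_ne_zero hΦ (S + T) ?_ ?_ (by rw [Multiset.sum_add, hTsum, add_neg_cancel])
  · simpa [or_imp, forall_and] using ⟨hS, hT⟩
  · rintro hST
    exact h (by simp [(add_eq_zero.1 hST).1])

theorem mem_of_nsmul_mem_closure {γ : V} (hγ : γ ∈ Φ) {k : ℕ} (hk : k ≠ 0)
    (h : k • γ ∈ AddSubmonoid.closure pos) : γ ∈ pos := by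
  by_contra hγ'
  have hneg : k • -γ ∈ AddSubmonoid.closure pos :=
    nsmul_mem (AddSubmonoid.subset_closure (hP.neg_mem_of_notMem (hΦ.neg_mem hγ) hγ')) k
  have := hP.eq_zero_of_mem_closure_of_neg_mem hΦ h (by rwa [← smul_neg])
  rw [← Nat.cast_smul_eq_nsmul ℝ, smul_eq_zero] at this
  exact this.elim (by exact_mod_cast hk) (hΦ.ne_zero hγ)

theorem smul_mem {α : V} (hα : α ∈ pos) {t : ℝ} (ht : 0 < t) (h : t • α ∈ Φ) : t • α ∈ pos := by
  have hαΦ := hP.subset hα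
  obtain ⟨n, -, hn⟩ := hΦ.exists_nat_of_coroot_pos hαΦ h
    (by simpa [hΦ.apply_self α hαΦ] using ht)
  refine hP.mem_of_nsmul_mem_closure hΦ h two_ne_zero ?_
  have : 2 • t • α = n • α := by
    rw [← Nat.cast_smul_eq_nsmul ℝ, ← Nat.cast_smul_eq_nsmul ℝ, smul_smul, ← hn]
    simp [hΦ.apply_self α hαΦ]; ring_nf
  rw [this]
  exact nsmul_mem (AddSubmonoid.subset_closure hα) n

theorem pos_of_smul_mem {α : V} (hα : α ∈ pos) {t : ℝ} (h : t • α ∈ pos) : 0 < t := by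
  by_contra! ht
  rcases ht.lt_or_eq with ht | rfl
  · have := hP.smul_mem hΦ hα (neg_pos.2 ht) (by simpa using hΦ.neg_mem (hP.subset h))
    exact hP.neg_notMem h (by simpa using this)
  · exact hΦ.zero_notMem (by simpa using hP.subset h)

theorem induction_on {p : V → Prop}
    (h : ∀ β ∈ pos, (∀ γ ∈ pos, β - γ ∈ AddSubmonoid.closure pos → γ ≠ β → p γ) → p β) :
    ∀ β ∈ pos, p β := by
  let r : V → V → Prop := fun γ β => β - γ ∈ AddSubmonoid.closure pos ∧ γ ≠ β
  have : IsStrictOrder V r :=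
    { irrefl := fun _ h => h.2 rfl
      trans := fun a b d hab hbd => ⟨by simpa using AddSubmonoid.add_mem _ hbd.1 hab.1, by
        rintro rfl
        exact hab.2 (sub_eq_zero.1
          (hP.eq_zero_of_mem_closure_of_neg_mem hΦ hab.1 (by simpa using hbd.1))).symm⟩ }
  exact fun β hβ => (hΦ.finite.subset hP.subset).wellFoundedOn.induction (r := r) hβ
    fun β hβ ih => h β hβ fun γ hγ h1 h2 => ih γ hγ ⟨h1, h2⟩

theorem mem_closure_simpleRoots {β : V} (hβ : β ∈ pos) :
    β ∈ AddSubmonoid.closure (simpleRoots pos) := by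
  refine hP.induction_on hΦ (fun β hβ ih => ?_) β hβ
  by_cases hs : β ∈ simpleRoots pos
  · exact AddSubmonoid.subset_closure hs
  obtain ⟨a, ha, b, hb, rfl⟩ : ∃ a ∈ pos, ∃ b ∈ pos, β = a + b := by
    simpa [simpleRoots, hβ] using hs
  have hb0 := hΦ.ne_zero (hP.subset hb)
  have ha0 := hΦ.ne_zero (hP.subset ha)
  refine AddSubmonoid.add_mem _ (ih a ha ?_ ?_) (ih b hb ?_ ?_)
  · simpa using AddSubmonoid.subset_closure hb
  · simpa using hb0
  · simpa using AddSubmonoid.subset_closure ha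
  · simpa using ha0

theorem sub_mem_of_mem_simpleRoots {δ α : V} (hδ : δ ∈ simpleRoots pos) (hα : α ∈ pos)
    (h : 0 < c δ α) (hne : α ≠ δ) : α - δ ∈ pos := by
  have hδΦ := hP.subset hδ.1
  have hsub := hΦ.sub_mem_of_rootForm_pos (hP.subset hα) hδΦ ((hΦ.coroot_pos_iff hδΦ α).1 h) hne
  by_contra h'
  exact hδ.2 ⟨α, hα, -(α - δ), hP.neg_mem_of_notMem (hΦ.neg_mem hsub) h', by abel⟩

theorem sub_nsmul_mem {δ α : V} (hδ : δ ∈ simpleRoots pos) (hα : α ∈ pos)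
    (hne : ∀ t : ℝ, α ≠ t • δ) (j : ℕ) (hj : 2 * j ≤ c δ α + 1) : α - j • δ ∈ pos := by
  induction j with
  | zero => simpa using hα
  | succ j ih =>
    push_cast at hj
    have hcoroot : c δ (α - j • δ) = c δ α - 2 * j := by
      simp [hΦ.apply_self δ (hP.subset hδ.1), mul_comm]
    have hne' : α - j • δ ≠ δ := fun h => hne (j + 1) <| by
      rw [sub_eq_iff_eq_add.1 h, add_smul, one_smul, Nat.cast_smul_eq_nsmul, add_comm]
    have := hP.sub_mem_of_mem_simpleRoots hΦ hδ (ih (by linarith)) (by linarith) hne'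
    rwa [succ_nsmul, ← sub_sub]

theorem rootReflection_apply_mem {δ α : V} (hδ : δ ∈ simpleRoots pos) (hα : α ∈ pos)
    (hne : ∀ t : ℝ, α ≠ t • δ) : rootReflection c δ α ∈ pos := by
  have hδΦ := hP.subset hδ.1
  have hαΦ := hP.subset hα
  have hrΦ := hΦ.apply_mem (hΦ.rootReflection_mem hδΦ) hαΦ
  rcases le_or_gt (c δ α) 0 with h | h
  · obtain ⟨n, hn⟩ := hΦ.exists_int δ hδΦ α hαΦ
    lift -n to ℕ using (by rw [neg_nonneg]; exact_mod_cast hn ▸ h) with m hm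
    refine hP.mem_of_nsmul_mem_closure hΦ hrΦ one_ne_zero ?_
    have : rootReflection c δ α = α + m • δ := by
      rw [hΦ.rootReflection_apply' hδΦ, hn, ← Nat.cast_smul_eq_nsmul ℝ, ← Int.cast_natCast, hm]
      simp [sub_eq_add_neg]
    rw [one_nsmul, this]
    exact AddSubmonoid.add_mem _ (AddSubmonoid.subset_closure hα)
      (nsmul_mem (AddSubmonoid.subset_closure hδ.1) m)
  · obtain ⟨n, -, hn⟩ := hΦ.exists_nat_of_coroot_pos hδΦ hαΦ h
    have hr : rootReflection c δ α = α - n • δ := by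
      rw [hΦ.rootReflection_apply' hδΦ, hn, Nat.cast_smul_eq_nsmul]
    by_contra hr'
    -- the `δ`-strings through `α` and through `-(s_δ α)` overlap with opposite signs
    have hβ : n • δ - α ∈ pos := by
      simpa [hr] using hP.neg_mem_of_notMem (hΦ.neg_mem hrΦ) hr'
    have hβne : ∀ t : ℝ, n • δ - α ≠ t • δ := fun t ht => hne (n - t) <| by
      rw [sub_smul, ← ht, Nat.cast_smul_eq_nsmul]; abel
    have hcβ : c δ (n • δ - α) = n := by
      simp [hn, hΦ.apply_self δ hδΦ]; ring
    have h1 := hP.sub_nsmul_mem hΦ hδ hα hne (n / 2) (by rw [hn]; exact_mod_cast (by omega))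
    have h2 := hP.sub_nsmul_mem hΦ hδ hβ hβne (n - n / 2) (by rw [hcβ]; exact_mod_cast (by omega))
    refine hP.neg_notMem h1 ?_
    have hsplit : (n - n / 2) • δ + (n / 2) • δ = n • δ := by
      rw [← add_nsmul, Nat.sub_add_cancel (Nat.div_le_self n 2)]
    convert h2 using 1
    rw [← hsplit]; abel

theorem exists_mem_simpleRoots_coroot_pos {β : V} (hβ : β ∈ pos) :
    ∃ δ ∈ simpleRoots pos, 0 < c δ β := by
  by_contra! h
  have hle : ∀ x ∈ AddSubmonoid.closure (simpleRoots pos), hΦ.rootForm x β ≤ 0 := by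
    intro x hx
    induction hx using AddSubmonoid.closure_induction with
    | mem δ hδ =>
      rw [hΦ.rootForm_comm]
      exact not_lt.1 fun h' => (h δ hδ).not_gt ((hΦ.coroot_pos_iff (hP.subset hδ.1) β).2 h')
    | zero => simp
    | add x y _ _ hx hy => simpa using add_nonpos hx hy
  exact (hΦ.rootForm_self_pos (hP.subset hβ)).not_ge (hle β (hP.mem_closure_simpleRoots hΦ hβ))

theorem rootReflection_mem_reflSubgroup_simpleRoots {β : V} (hβ : β ∈ pos) :
    rootReflection c β ∈ reflSubgroup c (simpleRoots pos) := by
  refine hP.induction_on hΦ (p := fun β => rootReflection c β ∈ _) (fun β hβ ih => ?_) β hβ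
  obtain ⟨δ, hδ, hδβ⟩ := hP.exists_mem_simpleRoots_coroot_pos hΦ hβ
  have hδΦ := hP.subset hδ.1
  have hδmem := rootReflection_mem_reflSubgroup hδ (hΦ.apply_self δ hδΦ)
  by_cases hprop : ∃ t : ℝ, β = t • δ
  · obtain ⟨t, rfl⟩ := hprop
    rwa [hΦ.rootReflection_smul hδΦ (hP.subset hβ)]
  obtain ⟨n, hn0, hn⟩ := hΦ.exists_nat_of_coroot_pos hδΦ (hP.subset hβ) hδβ
  have hγ := hP.rootReflection_apply_mem hΦ hδ hβ fun t ht => hprop ⟨t, ht⟩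
  have hsub : β - rootReflection c δ β = n • δ := by
    rw [hΦ.rootReflection_apply' hδΦ, hn, Nat.cast_smul_eq_nsmul]; abel
  have hconj := hΦ.mul_rootReflection_mul_inv (hΦ.rootReflection_mem hδΦ) (hP.subset hγ)
  rw [rootReflection_rootReflection] at hconj
  rw [← hconj]
  refine mul_mem (mul_mem hδmem (ih _ hγ ?_ ?_)) (inv_mem hδmem)
  · rw [hsub]; exact nsmul_mem (AddSubmonoid.subset_closure hδ.1) n
  · intro h
    rw [h, sub_self, eq_comm, ← Nat.cast_smul_eq_nsmul ℝ, smul_eq_zero] at hsub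
    exact hsub.elim (by exact_mod_cast hn0.ne') (hΦ.ne_zero hδΦ)

theorem reflSubgroup_le_simpleRoots : reflSubgroup c Φ ≤ reflSubgroup c (simpleRoots pos) := by
  rw [reflSubgroup_eq_closure hΦ.apply_self, Subgroup.closure_le]
  rintro _ ⟨β, hβ, rfl⟩
  by_cases hβ' : β ∈ pos
  · exact hP.rootReflection_mem_reflSubgroup_simpleRoots hΦ hβ'
  · rw [← hΦ.rootReflection_neg hβ]
    exact hP.rootReflection_mem_reflSubgroup_simpleRoots hΦ
      (hP.neg_mem_of_notMem (hΦ.neg_mem hβ) hβ')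

theorem reflProd_eq_one (L : List V) (hL : ∀ δ ∈ L, δ ∈ simpleRoots pos)
    (h : MapsTo (reflProd c L) pos pos) : reflProd c L = 1 := by
  induction hn : L.length using Nat.strong_induction_on generalizing L with
  | _ n ih =>
  obtain rfl | ⟨M, δ, rfl⟩ := L.eq_nil_or_concat
  · rfl
  simp only [List.concat_eq_append, List.mem_append, List.mem_singleton] at hL
  have hδ := hL δ (Or.inr rfl)
  have hδΦ := hP.subset hδ.1
  have hMδ : reflProd c M δ ∉ pos := fun hMδ => hP.neg_notMem hMδ <| by
    simpa [hΦ.rootReflection_apply_self hδΦ, reflProd_append] using h hδ.1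
  obtain ⟨A, d, B, rfl, hB, hdB⟩ := exists_append_cons_of_not_mem hδ.1 M hMδ
  have hd := hL d (Or.inl (by simp))
  obtain ⟨t, ht⟩ : ∃ t : ℝ, reflProd c B δ = t • d := by
    by_contra! hne
    exact hdB (hP.rootReflection_apply_mem hΦ hd hB hne)
  have hBW : reflProd c B ∈ reflSubgroup c Φ :=
    reflProd_mem_reflSubgroup hΦ.apply_self fun x hx => hP.subset (hL x (Or.inl (by simp [hx]))).1
  -- `s_d` and `s_δ` are conjugate by `reflProd c B`, so the two letters cancel
  have hswap : rootReflection c d * reflProd c B = reflProd c B * rootReflection c δ := by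
    have := hΦ.mul_rootReflection_mul_inv hBW hδΦ
    rw [ht, hΦ.rootReflection_smul (hP.subset hd.1) (ht ▸ hΦ.apply_mem hBW hδΦ)] at this
    rw [← this, inv_mul_cancel_right]
  have heq : reflProd c ((A ++ d :: B).concat δ) = reflProd c (A ++ B) := by
    simp only [List.concat_eq_append, reflProd_append, reflProd_cons, reflProd_nil, mul_one,
      mul_assoc, hswap, rootReflection_mul_self]
  rw [heq] at h ⊢
  refine ih _ ?_ (A ++ B) (fun x hx => hL x (Or.inl (by simp at hx ⊢; tauto))) h rfl
  simp only [← hn, List.concat_eq_append, List.length_append, List.length_cons]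
  omega

theorem eq_one_of_mapsTo {w : V ≃ₗ[ℝ] V} (hw : w ∈ reflSubgroup c Φ) (h : MapsTo w pos pos) :
    w = 1 := by
  obtain ⟨L, hL, rfl⟩ := exists_reflProd_eq (fun δ hδ => hΦ.apply_self δ (hP.subset hδ.1))
    (hP.reflSubgroup_le_simpleRoots hΦ hw)
  exact hP.reflProd_eq_one hΦ L hL h

theorem exists_mapsTo {Q : Set V} (hQ : IsPositiveSystem Φ Q) :
    ∃ y ∈ reflSubgroup c Φ, MapsTo y pos Q := by
  induction hn : (pos \ Q).ncard using Nat.strong_induction_on generalizing Q with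
  | _ n ih =>
  by_cases hsub : pos ⊆ Q
  · exact ⟨1, one_mem _, hsub⟩
  obtain ⟨δ, hδ, hδQ⟩ : ∃ δ ∈ simpleRoots pos, δ ∉ Q := by
    by_contra! h
    refine hsub fun α hα => hQ.mem_of_nsmul_mem_closure hΦ (hP.subset hα) one_ne_zero ?_
    rw [one_nsmul]
    exact AddSubmonoid.closure_mono h (hP.mem_closure_simpleRoots hΦ hα)
  have hδΦ := hP.subset hδ.1
  have hr := hΦ.rootReflection_mem hδΦ
  -- `s_δ` maps `pos \ s_δ⁻¹ Q` injectively into `pos \ Q`, missing `δ`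
  have hmaps : MapsTo (rootReflection c δ) (pos \ rootReflection c δ ⁻¹' Q) (pos \ Q) := by
    rintro α ⟨hα, hαQ⟩
    refine ⟨hP.rootReflection_apply_mem hΦ hδ hα ?_, hαQ⟩
    rintro t rfl
    apply hαQ
    rw [mem_preimage, map_smul, hΦ.rootReflection_apply_self hδΦ]
    exact hQ.smul_mem hΦ (hQ.neg_mem_of_notMem (hΦ.neg_mem hδΦ) hδQ)
      (hP.pos_of_smul_mem hΦ hδ.1 hα) (by simpa using hΦ.neg_mem (hP.subset hα))
  have hlt : (pos \ rootReflection c δ ⁻¹' Q).ncard < n := by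
    rw [← hn, ← ncard_image_of_injective _ (rootReflection c δ).injective]
    refine ncard_lt_ncard ((ssubset_iff_of_subset hmaps.image_subset).2 ⟨δ, ⟨hδ.1, hδQ⟩, ?_⟩)
      ((hΦ.finite.subset hP.subset).sdiff)
    rintro ⟨α, ⟨hα, -⟩, hαδ⟩
    have : α = -δ := by
      rw [← rootReflection_rootReflection (c := c) δ α, hαδ, hΦ.rootReflection_apply_self hδΦ]
    exact hP.neg_notMem hδ.1 (this ▸ hα)
  obtain ⟨y, hy, hyQ⟩ := ih _ hlt (hQ.preimage (hΦ.image_eq hr)) rfl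
  exact ⟨rootReflection c δ * y, mul_mem hr hy, fun α hα => hyQ hα⟩

theorem exists_mul_mem_stabilizer {w : V ≃ₗ[ℝ] V} (hw : ⇑w '' Φ = Φ) :
    ∃ y ∈ reflSubgroup c Φ, w * y ∈ MulAction.stabilizer (V ≃ₗ[ℝ] V) pos := by
  obtain ⟨y, hy, hyP⟩ := hP.exists_mapsTo hΦ (hP.preimage hw)
  refine ⟨y, hy, mem_stabilizer_iff_image_eq.2 ?_⟩
  exact ((hΦ.finite.subset hP.subset).injOn_iff_bijOn_of_mapsTo hyP).1
    (w * y).injective.injOn |>.image_eq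

end IsPositiveSystem

end RootSystems

theorem semidirect_decomposition_of_stabilizer_general
    {V : Type*} [AddCommGroup V] [Module ℝ V]
    (Φ : Set V) (c : V → Module.Dual ℝ V) (pos Ψ : Set V)
    (hΦfin : Φ.Finite) (hΦ0 : (0 : V) ∉ Φ)
    (hc2 : ∀ α ∈ Φ, c α α = 2)
    (hΦrefl : ∀ α ∈ Φ, ∀ β ∈ Φ, β - c α β • α ∈ Φ)
    (hcrys : ∀ α ∈ Φ, ∀ β ∈ Φ, ∃ n : ℤ, c α β = (n : ℝ))
    -- equivariance of the coroot assignment under the Weyl group of `Φ`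
    (hceq : ∀ w ∈ reflSubgroup c Φ, ∀ α ∈ Φ, ∀ x : V, c (w α) x = c α (w⁻¹ x))
    (hposΦ : pos ⊆ Φ)
    (hpos : ∀ α ∈ Φ, (α ∈ pos ↔ -α ∉ pos))
    (hposadd : ∀ α ∈ pos, ∀ β ∈ pos, α + β ∈ Φ → α + β ∈ pos)
    (hΨΦ : Ψ ⊆ Φ)
    (hΨrefl : ∀ α ∈ Ψ, ∀ β ∈ Ψ, β - c α β • α ∈ Ψ) :
    -- `W_Ψ ⊆ W'`
    (∀ x ∈ reflSubgroup c Ψ, x ∈ reflSubgroup c Φ ∧ (⇑x) '' Ψ = Ψ) ∧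
    -- `W_Ψ` is normal in `W'`
    (∀ w, w ∈ reflSubgroup c Φ → (⇑w) '' Ψ = Ψ →
      ∀ x ∈ reflSubgroup c Ψ, w * x * w⁻¹ ∈ reflSubgroup c Ψ) ∧
    -- `W'⁰ ∩ W_Ψ` is trivial
    (∀ w, w ∈ reflSubgroup c Φ → (⇑w) '' Ψ = Ψ → (⇑w) '' (Ψ ∩ pos) = Ψ ∩ pos →
      w ∈ reflSubgroup c Ψ → w = 1) ∧
    -- unique factorization `w = x * y`, `x ∈ W'⁰`, `y ∈ W_Ψ`
    (∀ w, w ∈ reflSubgroup c Φ → (⇑w) '' Ψ = Ψ →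
      ∃! p : (V ≃ₗ[ℝ] V) × (V ≃ₗ[ℝ] V),
        (p.1 ∈ reflSubgroup c Φ ∧ (⇑p.1) '' Ψ = Ψ ∧ (⇑p.1) '' (Ψ ∩ pos) = Ψ ∩ pos) ∧
        p.2 ∈ reflSubgroup c Ψ ∧ w = p.1 * p.2) := by
  have hΦ : IsRootSystem c Φ := ⟨hΦfin, hΦ0, hc2, hΦrefl, hcrys, hceq⟩
  have hP : IsPositiveSystem Φ pos := ⟨hposΦ, hpos, hposadd⟩
  have hΨ := hΦ.of_subset hΨΦ hΨrefl
  have hPΨ := hP.inter hΨΦ fun α hα => hΨ.neg_mem hα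
  have trivial_inter : ∀ y ∈ reflSubgroup c Ψ,
      y ∈ MulAction.stabilizer (V ≃ₗ[ℝ] V) (Ψ ∩ pos) → y = 1 := fun y hy hyP =>
    hPΨ.eq_one_of_mapsTo hΨ hy
      (Set.mapsTo_iff_image_subset.2 (mem_stabilizer_iff_image_eq.1 hyP).subset)
  refine ⟨fun x hx => ⟨reflSubgroup_mono hΨΦ hx, hΨ.image_eq hx⟩,
    fun w hw hwΨ x hx => hΦ.mul_mul_inv_mem_reflSubgroup hΨΦ hw
      (Set.mapsTo_iff_image_subset.2 hwΨ.subset) hx,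
    fun w _ _ hwP hwΨ => trivial_inter w hwΨ (mem_stabilizer_iff_image_eq.2 hwP),
    fun w hw hwΨ => ?_⟩
  obtain ⟨y, hy, hwy⟩ := hPΨ.exists_mul_mem_stabilizer hΨ hwΨ
  refine ⟨(w * y, y⁻¹), ⟨⟨mul_mem hw (reflSubgroup_mono hΨΦ hy), ?_,
    mem_stabilizer_iff_image_eq.1 hwy⟩, inv_mem hy, by group⟩, ?_⟩
  · rw [← mem_stabilizer_iff_image_eq] at hwΨ ⊢
    exact mul_mem hwΨ (mem_stabilizer_iff_image_eq.2 (hΨ.image_eq hy))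
  rintro ⟨x, y'⟩ ⟨⟨-, -, hxP⟩, hy', rfl⟩
  have h1 : y' * y = 1 := trivial_inter _ (mul_mem hy' hy) <| by
    simpa [mul_assoc] using mul_mem (inv_mem (mem_stabilizer_iff_image_eq.2 hxP)) hwy
  exact Prod.ext (by rw [mul_assoc, h1, mul_one]) (eq_inv_of_mul_eq_one_left h1)

/-- 5.7: let `W' = {w ∈ W : w(Ψ) = Ψ}` and `W'⁰ = {w ∈ W' : w(Ψ⁺) = Ψ⁺}`. Then
`W_Ψ ⊆ W'`, `W_Ψ` is normal in `W'`, `W'⁰ ∩ W_Ψ = {1}`, and every `w ∈ W'` factors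
uniquely as `w = x * y` with `x ∈ W'⁰` and `y ∈ W_Ψ`. -/
theorem semidirect_decomposition_of_stabilizer
    {V : Type*} [AddCommGroup V] [Module ℝ V]
    (Φ : Set V) (c : V → Module.Dual ℝ V) (pos Ψ : Set V)
    (hΦfin : Φ.Finite) (hΦ0 : (0 : V) ∉ Φ)
    (hc2 : ∀ α ∈ Φ, c α α = 2)
    (hΦrefl : ∀ α ∈ Φ, ∀ β ∈ Φ, β - c α β • α ∈ Φ)
    (hcrys : ∀ α ∈ Φ, ∀ β ∈ Φ, ∃ n : ℤ, c α β = (n : ℝ))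
    -- equivariance of the coroot assignment under the Weyl group of `Φ`
    (hceq : ∀ w ∈ reflSubgroup c Φ, ∀ α ∈ Φ, ∀ x : V, c (w α) x = c α (w⁻¹ x))
    (hposΦ : pos ⊆ Φ)
    (hpos : ∀ α ∈ Φ, (α ∈ pos ↔ -α ∉ pos))
    (hposadd : ∀ α ∈ pos, ∀ β ∈ pos, α + β ∈ Φ → α + β ∈ pos)
    (hΨΦ : Ψ ⊆ Φ) (hΨsymm : ∀ α ∈ Ψ, -α ∈ Ψ)
    (hΨrefl : ∀ α ∈ Ψ, ∀ β ∈ Ψ, β - c α β • α ∈ Ψ) :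
    -- `W_Ψ ⊆ W'`
    (∀ x ∈ reflSubgroup c Ψ, x ∈ reflSubgroup c Φ ∧ (⇑x) '' Ψ = Ψ) ∧
    -- `W_Ψ` is normal in `W'`
    (∀ w, w ∈ reflSubgroup c Φ → (⇑w) '' Ψ = Ψ →
      ∀ x ∈ reflSubgroup c Ψ, w * x * w⁻¹ ∈ reflSubgroup c Ψ) ∧
    -- `W'⁰ ∩ W_Ψ` is trivial
    (∀ w, w ∈ reflSubgroup c Φ → (⇑w) '' Ψ = Ψ → (⇑w) '' (Ψ ∩ pos) = Ψ ∩ pos →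
      w ∈ reflSubgroup c Ψ → w = 1) ∧
    -- unique factorization `w = x * y`, `x ∈ W'⁰`, `y ∈ W_Ψ`
    (∀ w, w ∈ reflSubgroup c Φ → (⇑w) '' Ψ = Ψ →
      ∃! p : (V ≃ₗ[ℝ] V) × (V ≃ₗ[ℝ] V),
        (p.1 ∈ reflSubgroup c Φ ∧ (⇑p.1) '' Ψ = Ψ ∧ (⇑p.1) '' (Ψ ∩ pos) = Ψ ∩ pos) ∧
        p.2 ∈ reflSubgroup c Ψ ∧ w = p.1 * p.2) :=
  semidirect_decomposition_of_stabilizer_general Φ c pos Ψ hΦfin hΦ0 hc2 hΦrefl hcrys hceq hposΦ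
    hpos hposadd hΨΦ hΨrefl
end

section
/- Let (W,S) be a finite Coxeter system with longest element w₀, and let σ be an automorphism of W with σ(S) = S. Let I', I'' ⊆ S and assume that the union of the σ-orbits of the elements of I' is all of S (i.e. every s ∈ S equals σⁿ(s') for some n ≥ 0 and s' ∈ I'). Then the set { a ∈ W : σ(a) = a, l(s a) < l(a) for all s ∈ I', and l(a s) < l(a) for all s ∈ I'' } is exactly {w₀}. -/
/-!
Everything reduces to uniqueness of the longest element: an element `a` having every simple
reflection as a left descent equals `w₀`. Since `σ` permutes the simple reflections it preserves
length, so for a `σ`-fixed `a` a left descent `s'` of `a` makes every `σⁿ s'` a left descent too,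
and the orbit hypothesis turns descents at `I'` into descents at all of `S`.

Uniqueness comes from the sign cocycle `η(w, t) = ±1` of the permutation representation of `W`
on `W × {±1}` in which `sᵢ` conjugates the first factor and flips the sign exactly at `sᵢ`. The
right inversions of `w` are the reflections with `η(w, t) = -1`, there are `ℓ w` of them, and
the cocycle identity makes the inversion set of `w₀ x` the complement of that of `x`. Hence
`ℓ (w₀ x) = ℓ w₀ - ℓ x`; a right descent `s` of `w₀ a⁻¹ ≠ 1` would then force `ℓ (s a) > ℓ a`.
-/

open List

theorem List.even_count_of_drop_eq_take {α : Type*} [BEq α] {L : List α} {m : ℕ}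
    (h : L.drop m = L.take m) (a : α) : Even (L.count a) := by
  rw [← take_append_drop m L, count_append, h]
  exact ⟨_, rfl⟩

namespace CoxeterSystem

variable {B W : Type*} [Group W] {M : CoxeterMatrix B} (cs : CoxeterSystem M W)

local prefix:100 "s " => cs.simple
local prefix:100 "π " => cs.wordProd
local prefix:100 "ℓ " => cs.length
local prefix:100 "ris " => cs.rightInvSeq
local prefix:100 "lis " => cs.leftInvSeq

theorem prod_map_reverse_alternatingWord {G : Type*} [Monoid G] (f : B → G) (i i' : B)
    (m : ℕ) : ((alternatingWord i i' (2 * m)).reverse.map f).prod = (f i' * f i) ^ m := by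
  induction m with
  | zero => simp [alternatingWord]
  | succ m ih =>
    rw [Nat.mul_succ, alternatingWord_succ, alternatingWord_succ, concat_eq_append,
      concat_eq_append, reverse_append, reverse_append]
    simp only [reverse_singleton, singleton_append, map_cons, prod_cons, ih, pow_succ',
      mul_assoc]

section SignCocycle

variable [DecidableEq W]

def simplePerm (i : B) : Equiv.Perm (W × ℤˣ) :=
  Equiv.prodShear (MulAut.conj (s i)).toEquiv
    fun t => Equiv.mulRight (if t = s i then -1 else 1)

theorem simplePerm_apply (i : B) (t : W) (ε : ℤˣ) :
    cs.simplePerm i (t, ε) = (s i * t * (s i)⁻¹, ε * if t = s i then -1 else 1) := rfl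

theorem prod_map_simplePerm_apply (ω : List B) (t : W) (ε : ℤˣ) :
    (ω.map cs.simplePerm).prod (t, ε) = (π ω * t * (π ω)⁻¹, ε * (-1) ^ (ris ω).count t) := by
  induction ω with
  | nil => simp
  | cons i ω ih =>
    have hconj : π ω * t * (π ω)⁻¹ = s i ↔ (π ω)⁻¹ * s i * π ω = t := by
      constructor <;> intro h <;> rw [← h] <;> group
    rw [map_cons, prod_cons, Equiv.Perm.mul_apply, ih, simplePerm_apply, rightInvSeq,
      count_cons, wordProd_cons, pow_add, Prod.mk.injEq]
    refine ⟨by group, ?_⟩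
    by_cases h : (π ω)⁻¹ * s i * π ω = t
    · simp [h, hconj.mpr h]
    · simp [h, mt hconj.mp h]

-- The `k`-th entry is `sᵢ (sᵢ' sᵢ)ᵏ`, so the sequence has period `M i i'`.
theorem even_count_leftInvSeq_alternatingWord (i i' : B) (t : W) :
    Even ((lis (alternatingWord i i' (2 * M i i'))).count t) := by
  apply List.even_count_of_drop_eq_take (m := M i i')
  apply List.ext_getElem (by simp; omega)
  intro k hk _
  simp only [getElem_drop, getElem_take]
  simp only [length_drop, length_leftInvSeq, length_alternatingWord] at hk
  have hprod (n : ℕ) : π alternatingWord i' i (2 * n + 1) = s i * (s i' * s i) ^ n := by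
    rw [prod_alternatingWord_eq_mul_pow, if_neg (by simp [parity_simps]),
      show (2 * n + 1) / 2 = n by omega]
  rw [getElem_leftInvSeq_alternatingWord _ _ _ _ _ (by omega),
    getElem_leftInvSeq_alternatingWord _ _ _ _ _ (by omega), hprod, hprod, pow_add,
    M.symmetric i i', cs.simple_mul_simple_pow, one_mul]

theorem isLiftable_simplePerm : M.IsLiftable cs.simplePerm := by
  intro i i'
  ext ⟨t, ε⟩ : 1
  rw [← prod_map_reverse_alternatingWord, M.symmetric i i', prod_map_simplePerm_apply,
    rightInvSeq_reverse, count_reverse,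
    (even_count_leftInvSeq_alternatingWord cs i' i t).neg_one_pow, wordProd_reverse,
    prod_alternatingWord_eq_mul_pow]
  simp [cs.simple_mul_simple_pow]

def reflectionPerm : W →* Equiv.Perm (W × ℤˣ) :=
  cs.lift ⟨cs.simplePerm, cs.isLiftable_simplePerm⟩

theorem reflectionPerm_wordProd (ω : List B) :
    cs.reflectionPerm (π ω) = (ω.map cs.simplePerm).prod := by
  rw [wordProd, map_list_prod, map_map]
  congr 2
  ext1 i
  exact cs.lift_apply_simple cs.isLiftable_simplePerm i

def inversionSign (w t : W) : ℤˣ := (cs.reflectionPerm w (t, 1)).2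

theorem inversionSign_wordProd (ω : List B) (t : W) :
    cs.inversionSign (π ω) t = (-1) ^ (ris ω).count t := by
  rw [inversionSign, reflectionPerm_wordProd, prod_map_simplePerm_apply, one_mul]

theorem reflectionPerm_apply (w t : W) (ε : ℤˣ) :
    cs.reflectionPerm w (t, ε) = (w * t * w⁻¹, ε * cs.inversionSign w t) := by
  obtain ⟨ω, rfl⟩ := cs.wordProd_surjective w
  rw [inversionSign_wordProd, reflectionPerm_wordProd, prod_map_simplePerm_apply]

theorem inversionSign_mul (w x t : W) :
    cs.inversionSign (w * x) t = cs.inversionSign x t * cs.inversionSign w (x * t * x⁻¹) := by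
  rw [inversionSign, map_mul, Equiv.Perm.mul_apply, reflectionPerm_apply cs x t 1, one_mul,
    reflectionPerm_apply]

theorem inversionSign_one (t : W) : cs.inversionSign 1 t = 1 := by
  simp [inversionSign]

theorem inversionSign_simple_self (i : B) : cs.inversionSign (s i) (s i) = -1 := by
  simpa using cs.inversionSign_wordProd [i] (s i)

variable {cs} in
theorem IsReflection.inversionSign_self {t : W} (ht : cs.IsReflection t) :
    cs.inversionSign t t = -1 := by
  obtain ⟨v, i, rfl⟩ := ht
  have hconj : v⁻¹ * (v * s i * v⁻¹) * v⁻¹⁻¹ = s i := by group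
  have hcancel := cs.inversionSign_mul v v⁻¹ (v * s i * v⁻¹)
  rw [mul_inv_cancel, inversionSign_one, hconj] at hcancel
  calc cs.inversionSign (v * s i * v⁻¹) (v * s i * v⁻¹)
      = cs.inversionSign v⁻¹ (v * s i * v⁻¹) *
          (cs.inversionSign (s i) (s i) * cs.inversionSign v (s i)) := by
        rw [inversionSign_mul, hconj, inversionSign_mul, mul_inv_cancel_right]
    _ = -1 := by
        rw [inversionSign_simple_self, neg_one_mul, mul_neg, ← hcancel]

theorem mem_rightInvSeq_of_inversionSign_eq_neg_one {ω : List B} {t : W}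
    (h : cs.inversionSign (π ω) t = -1) : t ∈ ris ω := by
  by_contra hmem
  rw [inversionSign_wordProd, count_eq_zero.mpr hmem, pow_zero] at h
  exact absurd h (by decide)

theorem isRightInversion_of_inversionSign_eq_neg_one {w t : W}
    (h : cs.inversionSign w t = -1) : cs.IsRightInversion w t := by
  obtain ⟨ω, hω, rfl⟩ := cs.exists_isReduced w
  exact cs.isRightInversion_of_mem_rightInvSeq hω
    (cs.mem_rightInvSeq_of_inversionSign_eq_neg_one h)

theorem isRightInversion_iff_inversionSign_eq_neg_one {w t : W} (ht : cs.IsReflection t) :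
    cs.IsRightInversion w t ↔ cs.inversionSign w t = -1 := by
  refine ⟨fun hwt => ?_, cs.isRightInversion_of_inversionSign_eq_neg_one⟩
  have hsplit := cs.inversionSign_mul (w * t) t t
  rw [mul_inv_cancel_right, mul_assoc, ht.mul_self, mul_one, ht.inversionSign_self,
    neg_one_mul] at hsplit
  rcases Int.units_eq_one_or (cs.inversionSign (w * t) t) with h | h
  · rw [hsplit, h]
  · have hlt := (cs.isRightInversion_of_inversionSign_eq_neg_one h).2
    rw [mul_assoc, ht.mul_self, mul_one] at hlt
    exact absurd hwt.2 (lt_asymm hlt)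

end SignCocycle

theorem ncard_setOf_isRightInversion (w : W) :
    {t | cs.IsRightInversion w t}.ncard = ℓ w := by
  classical
  obtain ⟨ω, hω, rfl⟩ := cs.exists_isReduced w
  have hset : {t | cs.IsRightInversion (π ω) t} = (ris ω).toFinset := by
    ext t
    exact ⟨fun h => mem_toFinset.mpr <| cs.mem_rightInvSeq_of_inversionSign_eq_neg_one <|
        (cs.isRightInversion_iff_inversionSign_eq_neg_one h.1).mp h,
      fun ht => cs.isRightInversion_of_mem_rightInvSeq hω (mem_toFinset.mp ht)⟩
  rw [hset, Set.ncard_coe_finset, toFinset_card_of_nodup hω.nodup_rightInvSeq,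
    length_rightInvSeq, hω]

def IsLongest (w₀ : W) : Prop := ∀ w, ℓ w ≤ ℓ w₀

namespace IsLongest

variable {cs} {w₀ : W}

theorem isRightInversion (h : cs.IsLongest w₀) {t : W} (ht : cs.IsReflection t) :
    cs.IsRightInversion w₀ t :=
  ⟨ht, lt_of_le_of_ne (h _) (ht.length_mul_left_ne w₀)⟩

theorem isLeftDescent (h : cs.IsLongest w₀) (i : B) : cs.IsLeftDescent w₀ i :=
  lt_of_le_of_ne (h _) (cs.length_simple_mul_ne w₀ i)

theorem isRightDescent (h : cs.IsLongest w₀) (i : B) : cs.IsRightDescent w₀ i :=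
  lt_of_le_of_ne (h _) (cs.length_mul_simple_ne w₀ i)

variable [Finite W]

theorem length_mul_add_length (h : cs.IsLongest w₀) (x : W) :
    ℓ (w₀ * x) + ℓ x = ℓ w₀ := by
  classical
  have hsub : {t | cs.IsRightInversion x t} ⊆ {t | cs.IsReflection t} := fun _ ht => ht.1
  have hall : {t | cs.IsRightInversion w₀ t} = {t | cs.IsReflection t} :=
    Set.ext fun _ => ⟨And.left, h.isRightInversion⟩
  have hcompl : {t | cs.IsRightInversion (w₀ * x) t}
      = {t | cs.IsReflection t} \ {t | cs.IsRightInversion x t} := by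
    ext t
    by_cases ht : cs.IsReflection t
    · have hw₀ := (cs.isRightInversion_iff_inversionSign_eq_neg_one (ht.conj x)).mp
        (h.isRightInversion (ht.conj x))
      simp only [Set.mem_sdiff, Set.mem_ofPred_eq,
        cs.isRightInversion_iff_inversionSign_eq_neg_one ht, inversionSign_mul, hw₀,
        mul_neg_one]
      rcases Int.units_eq_one_or (cs.inversionSign x t) with e | e <;> simp [e, ht]
    · simp [IsRightInversion, ht]
  have hcard := Set.ncard_sdiff hsub (Set.toFinite _)
  have hle := Set.ncard_le_ncard hsub (Set.toFinite _)
  rw [← hcompl] at hcard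
  rw [← hall] at hcard hle
  simp only [ncard_setOf_isRightInversion] at hcard hle
  omega

theorem eq_of_forall_isLeftDescent (h : cs.IsLongest w₀) {a : W}
    (ha : ∀ i, cs.IsLeftDescent a i) : a = w₀ := by
  by_contra hne
  obtain ⟨i, hi⟩ := cs.exists_rightDescent_of_ne_one (w := w₀ * a⁻¹)
    (by rwa [ne_eq, mul_inv_eq_one, eq_comm])
  have hlen := h.length_mul_add_length a⁻¹
  have hlen' := h.length_mul_add_length (a⁻¹ * s i)
  have hinv : ℓ (a⁻¹ * s i) = ℓ (s i * a) := by
    rw [← length_inv, mul_inv_rev, inv_inv, inv_simple]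
  rw [← mul_assoc] at hlen'
  rw [length_inv] at hlen
  have hdesc := ha i
  unfold IsRightDescent at hi
  unfold IsLeftDescent at hdesc
  omega

theorem unique (h : cs.IsLongest w₀) {w₁ : W} (h₁ : cs.IsLongest w₁) : w₁ = w₀ :=
  h.eq_of_forall_isLeftDescent h₁.isLeftDescent

end IsLongest

theorem length_map_le {B' W' : Type*} [Group W'] {M' : CoxeterMatrix B'}
    (cs' : CoxeterSystem M' W') {f : W →* W'} (hf : ∀ i, f (s i) ∈ Set.range cs'.simple)
    (w : W) : cs'.length (f w) ≤ ℓ w := by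
  choose g hg using hf
  obtain ⟨ω, hω, rfl⟩ := cs.exists_isReduced w
  have hmap : f (π ω) = cs'.wordProd (ω.map g) := by
    rw [wordProd, wordProd, map_list_prod, map_map, map_map]
    exact congrArg _ (map_congr_left fun i _ => (hg i).symm)
  rw [hmap, hω]
  exact (cs'.length_wordProd_le _).trans (length_map _).le

theorem length_map_of_image_range_simple {σ : W ≃* W}
    (hσ : σ '' Set.range cs.simple = Set.range cs.simple) (w : W) : ℓ (σ w) = ℓ w := by
  have hsymm (i : B) : σ.symm (s i) ∈ Set.range cs.simple := by
    obtain ⟨_, ⟨j, rfl⟩, hj⟩ : s i ∈ σ '' Set.range cs.simple :=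
      hσ.symm ▸ Set.mem_range_self i
    rw [← hj, σ.symm_apply_apply]
    exact ⟨j, rfl⟩
  refine le_antisymm (cs.length_map_le cs (f := σ.toMonoidHom)
    (fun i => hσ ▸ Set.mem_image_of_mem σ (Set.mem_range_self i)) w) ?_
  simpa using cs.length_map_le cs (f := σ.symm.toMonoidHom) hsymm (σ w)

end CoxeterSystem

/-- 6.18: in a finite Coxeter system, if `σ` is an automorphism preserving the set `S`
of simple reflections, `I', I'' ⊆ S`, and every element of `S` lies in the `σ`-orbit of
some element of `I'`, then the set of `σ`-fixed elements having every element of `I'` as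
a left descent and every element of `I''` as a right descent is exactly `{w₀}`, where
`w₀` is the longest element. -/
theorem fixed_with_descents_eq_longest
    {B W : Type*} [Group W] [Finite W] {M : CoxeterMatrix B} (cs : CoxeterSystem M W)
    (σ : W ≃* W) (hσ : (⇑σ) '' Set.range cs.simple = Set.range cs.simple)
    (I' I'' : Set W) (hI' : I' ⊆ Set.range cs.simple) (hI'' : I'' ⊆ Set.range cs.simple)
    (horb : ∀ s ∈ Set.range cs.simple, ∃ n : ℕ, ∃ s' ∈ I', s = (⇑σ)^[n] s')
    (w₀ : W) (hw₀ : ∀ v : W, cs.length v ≤ cs.length w₀) :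
    {a : W | σ a = a ∧ (∀ s ∈ I', cs.length (s * a) < cs.length a) ∧
        (∀ s ∈ I'', cs.length (a * s) < cs.length a)} = {w₀} := by
  have hlongest : cs.IsLongest w₀ := hw₀
  have hσlen := cs.length_map_of_image_range_simple hσ
  have hσlen_iterate (n : ℕ) (x : W) : cs.length ((⇑σ)^[n] x) = cs.length x :=
    congrFun (Function.iterate_invariant (g := cs.length) (funext hσlen) n) x
  ext a
  refine ⟨fun ⟨hfix, hleft, _⟩ => hlongest.eq_of_forall_isLeftDescent fun i => ?_, fun ha => ?_⟩
  · obtain ⟨n, s', hs', hs⟩ := horb _ ⟨i, rfl⟩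
    calc cs.length (cs.simple i * a) = cs.length ((⇑σ)^[n] (s' * a)) := by
          rw [iterate_map_mul, hs, Function.iterate_fixed hfix]
      _ = cs.length (s' * a) := hσlen_iterate n _
      _ < cs.length a := hleft s' hs'
  · rw [Set.mem_singleton_iff.mp ha]
    refine ⟨hlongest.unique fun v => (hσlen w₀).symm ▸ hw₀ v, ?_, ?_⟩
    · rintro _ hs
      obtain ⟨i, rfl⟩ := hI' hs
      exact hlongest.isLeftDescent i
    · rintro _ hs
      obtain ⟨i, rfl⟩ := hI'' hs
      exact hlongest.isRightDescent i
end

section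
/- Let (W,S) be a Coxeter system with S finite, δ an automorphism of W with δ(S) = S, and J ⊆ S. Call a sequence t = (J_n, w_n)_{n≥0} admissible if: J_0 = J; J_n = J_{n-1} ∩ w_{n-1} δ(J_{n-1}) w_{n-1}^{-1} for all n ≥ 1; w_n is the minimal length element of both W_{J_n} w_n and w_n W_{δ(J_n)} for all n ≥ 0; and w_n ∈ W_{J_n} w_{n-1} W_{δ(J_{n-1})} for all n ≥ 1. Then: (i) every admissible sequence satisfies J_n = J_{n+1} and w_n = w_{n+1} for all n ≥ |S|; and (ii) the map sending an admissible sequence t to its eventual value w_∞ is a bijection from the set of admissible sequences onto ᴶW = { w ∈ W : l(sw) > l(w) for all s ∈ J }. -/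
/-!
Write `t n = (J_n, w_n)` and `W_K` for the subgroup generated by `K`. Admissibility gives
`w_n⁻¹ w_{n+1} ∈ W_{δ(J_n)}`, so `w_n` is the minimal element of `w_m W_{δ(J_n)}` for all
`m ≥ n`. Hence `J_{n+1} = J_n` forces `t (n + 1) = t n`, and as the `J_n` decrease inside `S`,
this happens by step `|S|`.

Every `w_n` lies in `ᴶW`, by induction together with the invariant that `s ∈ J` and
`w_n⁻¹ s w_n ∈ W_{δ(J_n)}` imply `s ∈ J_n`: by the exchange condition, a descent `s ∈ J` of
`w_{n+1} = w_n y` that is not one of `w_n` satisfies `w_n⁻¹ s w_n ∈ W_{δ(J_n)}`, and minimality of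
`w_n` then puts `w_n⁻¹ s w_n` in `δ(J_n)`, that is `s ∈ J_{n+1}`, contradicting the minimality
of `w_{n+1}` in `W_{J_{n+1}} w_{n+1}`.

Conversely, for `v ∈ ᴶW` the admissible sequences with limit `v` are those with `w_n` minimal in
`v W_{δ(J_n)}`, and there is exactly one of them. At its stable step conjugation by `w_n` maps
`δ(J_n)` onto `J_n`, so a left descent of `w_n⁻¹ v` in `δ(J_n)` would be conjugate to a descent of
`v` in `J`; thus `w_n = v`.
-/

/-- A Bédard-admissible sequence `t n = (J_n, w_n)`, where `J_n` is a set of simple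
reflections of `W` and `w_n ∈ W`: `J_0 = J`; `J_n = J_{n-1} ∩ w_{n-1} δ(J_{n-1}) w_{n-1}⁻¹`;
`w_n` is of minimal length in `W_{J_n} w_n` and in `w_n W_{δ(J_n)}`; and
`w_n ∈ W_{J_n} w_{n-1} W_{δ(J_{n-1})}`. Standard parabolic subgroups are realized as
subgroup closures of sets of simple reflections. -/
def BedardAdmissible {B W : Type*} [Group W] {M : CoxeterMatrix B}
    (cs : CoxeterSystem M W) (δ : W ≃* W) (J : Set W) (t : ℕ → Set W × W) : Prop :=
  (t 0).1 = J ∧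
  (∀ n : ℕ, 1 ≤ n → (t n).1 =
    (t (n - 1)).1 ∩ (fun x => (t (n - 1)).2 * x * ((t (n - 1)).2)⁻¹) '' ((⇑δ) '' (t (n - 1)).1)) ∧
  (∀ n : ℕ, ∀ u ∈ Subgroup.closure (t n).1, cs.length (t n).2 ≤ cs.length (u * (t n).2)) ∧
  (∀ n : ℕ, ∀ u ∈ Subgroup.closure ((⇑δ) '' (t n).1), cs.length (t n).2 ≤ cs.length ((t n).2 * u)) ∧
  (∀ n : ℕ, 1 ≤ n → ∃ x ∈ Subgroup.closure (t n).1, ∃ y ∈ Subgroup.closure ((⇑δ) '' (t (n - 1)).1),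
    (t n).2 = x * (t (n - 1)).2 * y)

namespace List

theorem Sublist.cases_append_of_length_add_one {α : Type*} {l l₁ l₂ : List α}
    (h : l <+ l₁ ++ l₂) (hlen : l.length + 1 = (l₁ ++ l₂).length) :
    (∃ l₁' : List α, l₁' <+ l₁ ∧ l₁'.length < l₁.length ∧ l = l₁' ++ l₂) ∨
      ∃ l₂' : List α, l₂' <+ l₂ ∧ l₂'.length < l₂.length ∧ l = l₁ ++ l₂' := by
  obtain ⟨a, b, rfl, ha, hb⟩ := sublist_append_iff.mp h
  simp only [length_append] at hlen
  have := ha.length_le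
  have := hb.length_le
  by_cases hal : a.length = l₁.length
  · exact .inr ⟨b, hb, by omega, by rw [ha.eq_of_length hal]⟩
  · exact .inl ⟨a, ha, by omega, by rw [hb.eq_of_length (by omega)]⟩

end List

namespace CoxeterSystem

open List

variable {B W : Type*} [Group W] {M : CoxeterMatrix B} (cs : CoxeterSystem M W)

local prefix:100 "s" => cs.simple
local prefix:100 "π" => cs.wordProd
local prefix:100 "ℓ" => cs.length
local prefix:100 "lis" => cs.leftInvSeq

theorem conj_simple_eq_simple_iff (i : B) (w : W) : MulAut.conj (s i) w = s i ↔ w = s i := by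
  rw [MulAut.conj_apply, inv_simple, mul_eq_right, mul_eq_one_iff_inv_eq, inv_simple, eq_comm]

theorem prod_map_alternatingWord_two_mul {G : Type*} [Monoid G] (f : B → G) (i i' : B) (m : ℕ) :
    ((alternatingWord i i' (2 * m)).map f).prod = (f i * f i') ^ m := by
  induction m with
  | zero => simp [alternatingWord]
  | succ m ih =>
    rw [show 2 * (m + 1) = 2 * m + 1 + 1 by ring, alternatingWord_succ', alternatingWord_succ']
    simp [ih, pow_succ', mul_assoc]

theorem leftInvSeq_alternatingWord (i i' : B) (p : ℕ) :
    lis (alternatingWord i i' (2 * p)) =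
      (range (2 * p)).map fun k => π (alternatingWord i' i (2 * k + 1)) := by
  apply ext_getElem (by simp)
  intro k hk _
  simp only [getElem_map, getElem_range]
  exact cs.getElem_leftInvSeq_alternatingWord i i' p k (by simpa using hk)

theorem wordProd_alternatingWord_add_two_mul (i i' : B) (k : ℕ) :
    π (alternatingWord i' i (2 * (M i i' + k) + 1)) = π (alternatingWord i' i (2 * k + 1)) := by
  have half (n : ℕ) : (2 * n + 1) / 2 = n := by omega
  simp [prod_alternatingWord_eq_mul_pow, half, pow_add, parity_simps]

theorem even_count_leftInvSeq_braid [DecidableEq W] (i i' : B) (w : W) :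
    Even ((lis (alternatingWord i i' (2 * M i i'))).count w) := by
  have periodic : (fun k => π (alternatingWord i' i (2 * k + 1))) ∘ (M i i' + ·) =
      fun k => π (alternatingWord i' i (2 * k + 1)) :=
    funext (cs.wordProd_alternatingWord_add_two_mul i i')
  rw [leftInvSeq_alternatingWord, two_mul, range_add, map_append, map_map, periodic, count_append]
  exact Even.add_self _

section SimpleConjPerm

variable [DecidableEq W]

-- Tits' proof of the exchange condition: `s i` acts on `W × ZMod 2` by
-- `(w, ε) ↦ (s i w s i, ε + [w = s i])`. The left inversion sequence of the word
-- `(i i')^(M i i')` consists of two equal halves, so these involutions satisfy the braid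
-- relations and the action lifts to `W`.
noncomputable def simpleConjPerm (i : B) : Equiv.Perm (W × ZMod 2) :=
  Function.Involutive.toPerm
    (fun p => (MulAut.conj (s i) p.1, p.2 + if p.1 = s i then 1 else 0)) <| by
    rintro ⟨w, e⟩
    ext
    · simp [← mul_assoc]
    · simp only [conj_simple_eq_simple_iff]
      split_ifs <;> grind

theorem simpleConjPerm_apply (i : B) (w : W) (e : ZMod 2) :
    cs.simpleConjPerm i (w, e) = (MulAut.conj (s i) w, e + if w = s i then 1 else 0) := rfl

theorem prod_map_simpleConjPerm_apply (ω : List B) (w : W) (e : ZMod 2) :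
    (ω.map cs.simpleConjPerm).prod (w, e) =
      (MulAut.conj (π ω) w, e + (lis ω).count (MulAut.conj (π ω) w)) := by
  induction ω with
  | nil => simp
  | cons i ω ih =>
    rw [map_cons, prod_cons, Equiv.Perm.mul_apply, ih, simpleConjPerm_apply, wordProd_cons,
      map_mul, MulAut.mul_apply]
    dsimp only [leftInvSeq]
    rw [count_cons, count_map_of_injective _ _ (MulAut.conj _).injective]
    simp only [beq_iff_eq, eq_comm (a := s i), conj_simple_eq_simple_iff, Nat.cast_add,
      Nat.cast_ite, Nat.cast_one, Nat.cast_zero, add_assoc]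

theorem simpleConjPerm_isLiftable : M.IsLiftable cs.simpleConjPerm := by
  intro i i'
  have braid : π (alternatingWord i i' (2 * M i i')) = 1 := by
    simp [prod_alternatingWord_eq_mul_pow]
  ext ⟨w, e⟩ : 1
  rw [← prod_map_alternatingWord_two_mul, prod_map_simpleConjPerm_apply, braid]
  obtain ⟨c, hc⟩ := cs.even_count_leftInvSeq_braid i i' w
  simp [hc, ← two_mul, CharTwo.two_eq_zero]

noncomputable def simpleConjHom : W →* Equiv.Perm (W × ZMod 2) :=
  cs.lift ⟨cs.simpleConjPerm, cs.simpleConjPerm_isLiftable⟩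

theorem simpleConjHom_wordProd_apply (ω : List B) (w : W) (e : ZMod 2) :
    cs.simpleConjHom (π ω) (w, e) =
      (MulAut.conj (π ω) w, e + (lis ω).count (MulAut.conj (π ω) w)) := by
  rw [← prod_map_simpleConjPerm_apply, wordProd, map_list_prod, map_map]
  congr 3
  exact funext (cs.lift_apply_simple cs.simpleConjPerm_isLiftable)

end SimpleConjPerm

theorem simple_mem_leftInvSeq {ω : List B} {i : B} (h : ℓ (s i * π ω) < ℓ (π ω)) :
    s i ∈ lis ω := by
  classical
  obtain ⟨σ, hσ, hσω⟩ := cs.exists_isReduced (s i * π ω)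
  have hω : π ω = s i * π σ := by rw [← hσω, simple_mul_simple_cancel_left]
  have hσ_not : s i ∉ lis σ := fun hmem => by
    have := (cs.isLeftInversion_of_mem_leftInvSeq hσ hmem).2
    rw [← hσω, simple_mul_simple_cancel_left] at this
    omega
  -- Evaluating `π ω = s i * π σ` at `(w₀, 0)` in two ways shows that `s i` occurs an odd
  -- number of times in `lis ω`.
  set w₀ := MulAut.conj (π σ)⁻¹ (s i)
  have h₁ := cs.simpleConjHom_wordProd_apply ω w₀ 0
  rw [show MulAut.conj (π ω) w₀ = s i by simp [w₀, hω, mul_assoc]] at h₁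
  have h₂ : cs.simpleConjHom (π ω) (w₀, 0) = (s i, 1) := by
    rw [hω, map_mul, Equiv.Perm.mul_apply, simpleConjHom_wordProd_apply,
      show MulAut.conj (π σ) w₀ = s i by simp [w₀, mul_assoc], count_eq_zero_of_not_mem hσ_not,
      simpleConjHom, lift_apply_simple, simpleConjPerm_apply]
    simp
  have hodd := congrArg Prod.snd (h₁.symm.trans h₂)
  refine count_pos_iff.mp (Nat.pos_of_ne_zero fun h₀ => ?_)
  simp [h₀] at hodd

theorem exists_sublist_wordProd_eq_simple_mul {ω : List B} {i : B}
    (h : ℓ (s i * π ω) < ℓ (π ω)) :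
    ∃ ω' : List B, ω' <+ ω ∧ ω'.length + 1 = ω.length ∧ π ω' = s i * π ω := by
  obtain ⟨j, hj, hji⟩ := mem_iff_getElem.mp (cs.simple_mem_leftInvSeq h)
  rw [length_leftInvSeq] at hj
  refine ⟨ω.eraseIdx j, eraseIdx_sublist _ _, length_eraseIdx_add_one hj, ?_⟩
  rw [← getD_leftInvSeq_mul_wordProd, getD_eq_getElem _ _ (by simpa), hji]

theorem exists_sublist_wordProd_eq_mul_simple {ω : List B} {i : B}
    (h : ℓ (π ω * s i) < ℓ (π ω)) :
    ∃ ω' : List B, ω' <+ ω ∧ ω'.length + 1 = ω.length ∧ π ω' = π ω * s i := by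
  have h' : ℓ (s i * π ω.reverse) < ℓ (π ω.reverse) := by
    rwa [wordProd_reverse, length_inv, ← length_inv, mul_inv_rev, inv_inv, inv_simple]
  obtain ⟨ω', hsub, hlen, hω'⟩ := cs.exists_sublist_wordProd_eq_simple_mul h'
  refine ⟨ω'.reverse, by simpa using hsub.reverse, by simpa using hlen, ?_⟩
  rw [wordProd_reverse, hω', wordProd_reverse, mul_inv_rev, inv_inv, inv_simple]

theorem simple_mul_wordProd_append_cases {ω₁ ω₂ : List B} {i : B}
    (h : ℓ (s i * π (ω₁ ++ ω₂)) < ℓ (π (ω₁ ++ ω₂))) :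
    (∃ ω₁' : List B, ω₁' <+ ω₁ ∧ ω₁'.length < ω₁.length ∧ π ω₁' = s i * π ω₁) ∨
      ∃ ω₂' : List B, ω₂' <+ ω₂ ∧ ω₂'.length < ω₂.length ∧
        π ω₁ * π ω₂' = s i * π ω₁ * π ω₂ := by
  obtain ⟨ω', hsub, hlen, hω'⟩ := cs.exists_sublist_wordProd_eq_simple_mul h
  rcases hsub.cases_append_of_length_add_one hlen with ⟨ω₁', h₁, hl, rfl⟩ | ⟨ω₂', h₂, hl, rfl⟩
  all_goals rw [wordProd_append, wordProd_append, ← mul_assoc] at hω'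
  exacts [.inl ⟨ω₁', h₁, hl, mul_right_cancel hω'⟩, .inr ⟨ω₂', h₂, hl, hω'⟩]

theorem wordProd_append_mul_simple_cases {ω₁ ω₂ : List B} {i : B}
    (h : ℓ (π (ω₁ ++ ω₂) * s i) < ℓ (π (ω₁ ++ ω₂))) :
    (∃ ω₁' : List B, ω₁' <+ ω₁ ∧ ω₁'.length < ω₁.length ∧
        π ω₁' * π ω₂ = π ω₁ * π ω₂ * s i) ∨
      ∃ ω₂' : List B, ω₂' <+ ω₂ ∧ ω₂'.length < ω₂.length ∧ π ω₂' = π ω₂ * s i := by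
  obtain ⟨ω', hsub, hlen, hω'⟩ := cs.exists_sublist_wordProd_eq_mul_simple h
  rcases hsub.cases_append_of_length_add_one hlen with ⟨ω₁', h₁, hl, rfl⟩ | ⟨ω₂', h₂, hl, rfl⟩
  all_goals rw [wordProd_append, wordProd_append] at hω'
  · exact .inl ⟨ω₁', h₁, hl, hω'⟩
  · rw [mul_assoc] at hω'
    exact .inr ⟨ω₂', h₂, hl, mul_left_cancel hω'⟩

theorem exists_reduced_sublist (ω : List B) :
    ∃ ω' : List B, ω' <+ ω ∧ cs.IsReduced ω' ∧ π ω' = π ω := by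
  induction ω with
  | nil => exact ⟨[], Sublist.slnil, by simp [IsReduced], rfl⟩
  | cons i ω ih =>
    obtain ⟨ω', hsub, hred, hω'⟩ := ih
    have hred' : ℓ (π ω') = ω'.length := hred
    rcases cs.length_simple_mul (π ω') i with hlen | hlen
    · refine ⟨i :: ω', hsub.cons_cons i, ?_, by rw [wordProd_cons, wordProd_cons, hω']⟩
      simp only [IsReduced, wordProd_cons, length_cons]
      omega
    · obtain ⟨ω'', hsub', hlen', hω''⟩ :=
        cs.exists_sublist_wordProd_eq_simple_mul (ω := ω') (i := i) (by omega)
      refine ⟨ω'', (hsub'.trans hsub).cons i, ?_, by rw [hω'', hω', wordProd_cons]⟩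
      simp only [IsReduced, hω'']
      omega

variable {L : Set W}

theorem wordProd_mem_closure {ω : List B} (hω : ∀ i ∈ ω, s i ∈ L) :
    π ω ∈ Subgroup.closure L :=
  (Subgroup.closure L).list_prod_mem (by simpa using fun i hi => Subgroup.subset_closure (hω i hi))

theorem exists_word_of_mem_closure (hL : L ⊆ Set.range cs.simple) {u : W}
    (hu : u ∈ Subgroup.closure L) : ∃ ω : List B, (∀ i ∈ ω, s i ∈ L) ∧ π ω = u := by
  induction hu using Subgroup.closure_induction with
  | mem x hx =>
    obtain ⟨i, rfl⟩ := hL hx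
    exact ⟨[i], by simpa using hx, wordProd_singleton cs i⟩
  | one => exact ⟨[], by simp, wordProd_nil cs⟩
  | mul x y _ _ hx hy =>
    obtain ⟨ω₁, h₁, rfl⟩ := hx
    obtain ⟨ω₂, h₂, rfl⟩ := hy
    refine ⟨ω₁ ++ ω₂, fun i hi => ?_, wordProd_append cs ω₁ ω₂⟩
    rcases mem_append.mp hi with hi | hi
    exacts [h₁ i hi, h₂ i hi]
  | inv x _ hx =>
    obtain ⟨ω, hω, rfl⟩ := hx
    exact ⟨ω.reverse, fun i hi => hω i (mem_reverse.mp hi), wordProd_reverse cs ω⟩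

theorem exists_isReduced_of_mem_closure (hL : L ⊆ Set.range cs.simple) {u : W}
    (hu : u ∈ Subgroup.closure L) :
    ∃ ω : List B, (∀ i ∈ ω, s i ∈ L) ∧ cs.IsReduced ω ∧ π ω = u := by
  obtain ⟨ω, hωL, rfl⟩ := cs.exists_word_of_mem_closure hL hu
  obtain ⟨ω', hsub, hred, hω'⟩ := cs.exists_reduced_sublist ω
  exact ⟨ω', fun i hi => hωL i (hsub.subset hi), hred, hω'⟩

theorem simple_mem_of_mem_closure (hL : L ⊆ Set.range cs.simple) {i : B}
    (h : s i ∈ Subgroup.closure L) : s i ∈ L := by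
  obtain ⟨ω, hωL, hω, hωi⟩ := cs.exists_isReduced_of_mem_closure hL h
  obtain ⟨j, rfl⟩ : ∃ j, ω = [j] := by
    rw [← List.length_eq_one_iff, ← hω.eq, hωi, length_simple]
  rw [← hωi, wordProd_singleton]
  exact hωL j (mem_singleton_self j)

theorem exists_length_mul_lt_of_mem_closure (hL : L ⊆ Set.range cs.simple) {u : W}
    (hu : u ∈ Subgroup.closure L) (hne : u ≠ 1) : ∃ x ∈ L, ℓ (x * u) < ℓ u := by
  obtain ⟨_ | ⟨i, ω⟩, hωL, hω, rfl⟩ := cs.exists_isReduced_of_mem_closure hL hu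
  · exact absurd (wordProd_nil cs) hne
  · refine ⟨s i, hωL i mem_cons_self, ?_⟩
    have := hω.eq
    have := cs.length_wordProd_le ω
    rw [wordProd_cons, simple_mul_simple_cancel_left] at *
    simp only [length_cons] at *
    omega

theorem conj_simple_mem_closure_of_length_lt (hL : L ⊆ Set.range cs.simple) {w y : W} {i : B}
    (hy : y ∈ Subgroup.closure L) (hwy : ℓ (s i * (w * y)) < ℓ (w * y))
    (hw : ℓ w < ℓ (s i * w)) : w⁻¹ * s i * w ∈ Subgroup.closure L := by
  obtain ⟨ω₂, hω₂L, rfl⟩ := cs.exists_word_of_mem_closure hL hy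
  obtain ⟨ω₁, hω₁, rfl⟩ := cs.exists_isReduced w
  rw [← wordProd_append] at hwy
  rcases cs.simple_mul_wordProd_append_cases hwy with ⟨ω₁', -, hl, heq⟩ | ⟨ω₂', hsub, -, heq⟩
  · have := cs.length_wordProd_le ω₁'
    have := hω₁.eq
    rw [heq] at *
    omega
  · have hconj : (π ω₁)⁻¹ * s i * π ω₁ = π ω₂' * (π ω₂)⁻¹ := by
      rw [← inv_mul_cancel_left (π ω₁) (π ω₂'), heq]
      group
    rw [hconj]
    exact mul_mem (cs.wordProd_mem_closure fun j hj => hω₂L j (hsub.subset hj))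
      (inv_mem (cs.wordProd_mem_closure hω₂L))

variable (L) in
def IsMinInLeftCoset (w : W) : Prop := ∀ u ∈ Subgroup.closure L, ℓ w ≤ ℓ (w * u)

variable (L) in
def IsMinInRightCoset (w : W) : Prop := ∀ u ∈ Subgroup.closure L, ℓ w ≤ ℓ (u * w)

variable (L) in
theorem exists_isMinInLeftCoset (v : W) :
    ∃ w, cs.IsMinInLeftCoset L w ∧ w⁻¹ * v ∈ Subgroup.closure L := by
  obtain ⟨u, hu, hmin⟩ := (measure fun u => ℓ (v * u)).wf.has_min (Subgroup.closure L : Set W)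
    ⟨1, one_mem _⟩
  refine ⟨v * u, fun u' hu' => ?_, by simpa using inv_mem hu⟩
  rw [mul_assoc]
  exact not_lt.mp (hmin _ (mul_mem hu hu'))

namespace IsMinInLeftCoset

variable {cs} {w : W}

theorem length_mul (hL : L ⊆ Set.range cs.simple) (hw : cs.IsMinInLeftCoset L w) {u : W}
    (hu : u ∈ Subgroup.closure L) : ℓ (w * u) = ℓ w + ℓ u := by
  obtain ⟨ω, hωL, hω, rfl⟩ := cs.exists_isReduced_of_mem_closure hL hu
  obtain ⟨ωw, hωw, rfl⟩ := cs.exists_isReduced w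
  rw [hω.eq]
  induction ω using List.reverseRecOn with
  | nil => simp
  | append_singleton ω i ih =>
    have hωL' : ∀ j ∈ ω, s j ∈ L := fun j hj => hωL j (mem_append_left _ hj)
    have hω₀ := cs.wordProd_mem_closure hωL'
    have ih := ih hωL' (by simpa using hω.take ω.length) hω₀
    rw [wordProd_append, wordProd_singleton, ← mul_assoc, length_append, length_singleton]
    rcases cs.length_mul_simple (π ωw * π ω) i with hlen | hlen
    · omega
    exfalso
    -- The exchange condition deletes a letter either of `ωw`, making `w` shorter in `w W_L`,
    -- or of the reduced word `ω ++ [i]`.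
    rcases cs.wordProd_append_mul_simple_cases (ω₁ := ωw) (ω₂ := ω) (i := i)
      (by rw [wordProd_append]; omega) with ⟨ω₁', -, hl, heq⟩ | ⟨ω₂', -, hl, heq⟩
    · have hconj : π ωw * (π ω * s i * (π ω)⁻¹) = π ω₁' := by
        rw [← mul_inv_cancel_right (π ω₁') (π ω), heq]
        group
      have := hw _ (mul_mem (mul_mem hω₀ (Subgroup.subset_closure (hωL i (by simp))))
        (inv_mem hω₀))
      have := cs.length_wordProd_le ω₁'
      have := hωw.eq
      rw [hconj] at *
      omega
    · have := hω.eq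
      have := cs.length_wordProd_le ω₂'
      rw [wordProd_append, wordProd_singleton, ← heq] at *
      simp only [length_append, length_singleton] at *
      omega

theorem eq_of_inv_mul_mem (hL : L ⊆ Set.range cs.simple) {w' : W}
    (hw : cs.IsMinInLeftCoset L w) (hw' : cs.IsMinInLeftCoset L w')
    (h : w⁻¹ * w' ∈ Subgroup.closure L) : w = w' := by
  have h₁ := hw.length_mul hL h
  have h₂ := hw'.length_mul hL (inv_mem h)
  rw [mul_inv_cancel_left] at h₁
  rw [mul_inv_rev, inv_inv, mul_inv_cancel_left, ← length_inv cs (w'⁻¹ * w), mul_inv_rev,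
    inv_inv] at h₂
  rw [← inv_mul_eq_one, ← cs.length_eq_zero_iff]
  omega

theorem conj_simple_mem (hL : L ⊆ Set.range cs.simple) (hw : cs.IsMinInLeftCoset L w) {i : B}
    (h : w⁻¹ * s i * w ∈ Subgroup.closure L) : w⁻¹ * s i * w ∈ L := by
  have hadd := hw.length_mul hL h
  rw [show w * (w⁻¹ * s i * w) = s i * w by group] at hadd
  obtain ⟨j, hj⟩ := cs.length_eq_one_iff.mp (show ℓ (w⁻¹ * s i * w) = 1 by
    have := cs.length_simple_mul_ne w i
    rcases cs.length_simple_mul w i with _ | _ <;> omega)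
  rw [hj] at h ⊢
  exact cs.simple_mem_of_mem_closure hL h

end IsMinInLeftCoset

theorem isMinInLeftCoset_of_forall_length_lt (hL : L ⊆ Set.range cs.simple) {w : W}
    (h : ∀ x ∈ L, ℓ w < ℓ (w * x)) : cs.IsMinInLeftCoset L w := by
  obtain ⟨w₀, hw₀, hu⟩ := cs.exists_isMinInLeftCoset L w
  obtain rfl | hne := eq_or_ne w₀ w
  · exact hw₀
  obtain ⟨x, hx, hlt⟩ := cs.exists_length_mul_lt_of_mem_closure hL (inv_mem hu)
    (by simpa [inv_mul_eq_one] using hne.symm)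
  obtain ⟨i, rfl⟩ := hL hx
  rw [← length_inv, mul_inv_rev, inv_inv, inv_simple, length_inv] at hlt
  have h₁ := hw₀.length_mul hL hu
  have h₂ := cs.length_mul_le w₀ (w₀⁻¹ * w * s i)
  rw [mul_inv_cancel_left] at h₁
  rw [← mul_assoc, mul_inv_cancel_left] at h₂
  have := h _ hx
  omega

theorem isMinInRightCoset_of_forall_length_lt (hL : L ⊆ Set.range cs.simple) {w : W}
    (h : ∀ x ∈ L, ℓ w < ℓ (x * w)) : cs.IsMinInRightCoset L w := by
  have hinv : cs.IsMinInLeftCoset L w⁻¹ := cs.isMinInLeftCoset_of_forall_length_lt hL fun x hx => by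
    obtain ⟨i, rfl⟩ := hL hx
    rw [← length_inv cs (w⁻¹ * _), mul_inv_rev, inv_inv, inv_simple, length_inv]
    exact h _ hx
  intro u hu
  simpa [← mul_inv_rev, length_inv] using hinv u⁻¹ (inv_mem hu)

end CoxeterSystem

def bedardNext {W : Type*} [Group W] (δ : W ≃* W) (K : Set W) (w : W) : Set W :=
  K ∩ (fun x => w * x * w⁻¹) '' (δ '' K)

namespace BedardAdmissible

open CoxeterSystem

variable {B W : Type*} [Group W] {M : CoxeterMatrix B} {cs : CoxeterSystem M W} {δ : W ≃* W}
  {J : Set W} {t : ℕ → Set W × W}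

theorem fst_succ (hadm : BedardAdmissible cs δ J t) (n : ℕ) :
    (t (n + 1)).1 = bedardNext δ (t n).1 (t n).2 :=
  hadm.2.1 (n + 1) n.succ_pos

theorem isMinInRightCoset (hadm : BedardAdmissible cs δ J t) (n : ℕ) :
    cs.IsMinInRightCoset (t n).1 (t n).2 :=
  hadm.2.2.1 n

theorem isMinInLeftCoset (hadm : BedardAdmissible cs δ J t) (n : ℕ) :
    cs.IsMinInLeftCoset (δ '' (t n).1) (t n).2 :=
  hadm.2.2.2.1 n

theorem fst_antitone (hadm : BedardAdmissible cs δ J t) : Antitone fun n => (t n).1 :=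
  antitone_nat_of_succ_le fun n => by
    rw [hadm.fst_succ]
    exact Set.inter_subset_left

theorem fst_subset (hadm : BedardAdmissible cs δ J t) (n : ℕ) : (t n).1 ⊆ J :=
  hadm.1 ▸ hadm.fst_antitone n.zero_le

theorem image_fst_subset (hadm : BedardAdmissible cs δ J t)
    (hδ : δ '' Set.range cs.simple = Set.range cs.simple) (hJ : J ⊆ Set.range cs.simple)
    (n : ℕ) : δ '' (t n).1 ⊆ Set.range cs.simple :=
  hδ ▸ Set.image_mono ((hadm.fst_subset n).trans hJ)

theorem length_lt_mul_snd_of_mem_fst (hadm : BedardAdmissible cs δ J t)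
    (hJ : J ⊆ Set.range cs.simple) {n : ℕ} {x : W} (hx : x ∈ (t n).1) :
    cs.length (t n).2 < cs.length (x * (t n).2) := by
  obtain ⟨i, rfl⟩ := hJ (hadm.fst_subset n hx)
  have := hadm.isMinInRightCoset n _ (Subgroup.subset_closure hx)
  have := cs.length_simple_mul_ne (t n).2 i
  omega

theorem conj_mem_of_mem_fst_succ (hadm : BedardAdmissible cs δ J t) {n : ℕ} {x : W}
    (hx : x ∈ (t (n + 1)).1) : (t n).2⁻¹ * x * (t n).2 ∈ δ '' (t n).1 := by
  rw [hadm.fst_succ] at hx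
  obtain ⟨-, y, hy, rfl⟩ := hx
  simpa [mul_assoc] using hy

theorem inv_mul_snd_succ_mem (hadm : BedardAdmissible cs δ J t) (n : ℕ) :
    (t n).2⁻¹ * (t (n + 1)).2 ∈ Subgroup.closure (δ '' (t n).1) := by
  obtain ⟨x, hx, y, hy, hxy⟩ := hadm.2.2.2.2 (n + 1) n.succ_pos
  rw [Nat.add_sub_cancel] at hy hxy
  have hconj : Subgroup.closure (t (n + 1)).1 ≤
      (Subgroup.closure (δ '' (t n).1)).comap (MulAut.conj (t n).2⁻¹).toMonoidHom :=
    (Subgroup.closure_le _).mpr fun x hx => by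
      simpa using Subgroup.subset_closure (hadm.conj_mem_of_mem_fst_succ hx)
  rw [hxy, show (t n).2⁻¹ * (x * (t n).2 * y) = (t n).2⁻¹ * x * (t n).2 * y by group]
  exact mul_mem (by simpa using hconj hx) hy

theorem inv_mul_snd_mem (hadm : BedardAdmissible cs δ J t) {n m : ℕ} (h : n ≤ m) :
    (t n).2⁻¹ * (t m).2 ∈ Subgroup.closure (δ '' (t n).1) := by
  induction m, h using Nat.le_induction with
  | base => simp
  | succ m hm ih =>
    rw [← mul_inv_cancel_left (t m).2 (t (m + 1)).2, ← mul_assoc]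
    exact mul_mem ih (Subgroup.closure_mono (Set.image_mono (hadm.fst_antitone hm))
      (hadm.inv_mul_snd_succ_mem m))

theorem succ_eq_of_fst_succ_eq (hadm : BedardAdmissible cs δ J t)
    (hδ : δ '' Set.range cs.simple = Set.range cs.simple) (hJ : J ⊆ Set.range cs.simple)
    {n : ℕ} (h : (t (n + 1)).1 = (t n).1) : t (n + 1) = t n := by
  have hmin := hadm.isMinInLeftCoset (n + 1)
  rw [h] at hmin
  exact Prod.ext h ((hadm.isMinInLeftCoset n).eq_of_inv_mul_mem (hadm.image_fst_subset hδ hJ n)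
    hmin (hadm.inv_mul_snd_succ_mem n)).symm

theorem succ_eq_of_le (hadm : BedardAdmissible cs δ J t)
    (hδ : δ '' Set.range cs.simple = Set.range cs.simple) (hJ : J ⊆ Set.range cs.simple)
    {k n : ℕ} (hk : t (k + 1) = t k) (hn : k ≤ n) : t (n + 1) = t n := by
  induction n, hn using Nat.le_induction with
  | base => exact hk
  | succ n _ ih =>
    refine hadm.succ_eq_of_fst_succ_eq hδ hJ ?_
    rw [hadm.fst_succ (n + 1), ih, ← hadm.fst_succ n, ih]

theorem exists_fst_succ_eq [Fintype B] (hadm : BedardAdmissible cs δ J t)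
    (hJ : J ⊆ Set.range cs.simple) : ∃ k ≤ Fintype.card B, (t (k + 1)).1 = (t k).1 := by
  by_contra! hne
  have hfin (n : ℕ) : (t n).1.Finite :=
    (Set.finite_range cs.simple).subset ((hadm.fst_subset n).trans hJ)
  have hdecr (k : ℕ) (hk : k ≤ Fintype.card B + 1) : (t k).1.ncard + k ≤ (t 0).1.ncard := by
    induction k with
    | zero => simp
    | succ k ih =>
      have := ih (by omega)
      have : (t (k + 1)).1.ncard < (t k).1.ncard :=
        Set.ncard_lt_ncard ((hadm.fst_antitone k.le_succ).ssubset_of_ne (hne k (by omega))) (hfin k)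
      omega
  have hJcard : (t 0).1.ncard ≤ Fintype.card B := by
    rw [hadm.1, ← Nat.card_eq_fintype_card]
    exact (Set.ncard_le_ncard hJ).trans (Finite.card_range_le cs.simple)
  have := hdecr _ le_rfl
  omega

theorem succ_eq_of_card_le [Fintype B] (hadm : BedardAdmissible cs δ J t)
    (hδ : δ '' Set.range cs.simple = Set.range cs.simple) (hJ : J ⊆ Set.range cs.simple)
    {n : ℕ} (hn : Fintype.card B ≤ n) : t (n + 1) = t n := by
  obtain ⟨k, hk, hfst⟩ := hadm.exists_fst_succ_eq hJ
  exact hadm.succ_eq_of_le hδ hJ (hadm.succ_eq_of_fst_succ_eq hδ hJ hfst) (hk.trans hn)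

theorem eq_of_card_le [Fintype B] (hadm : BedardAdmissible cs δ J t)
    (hδ : δ '' Set.range cs.simple = Set.range cs.simple) (hJ : J ⊆ Set.range cs.simple)
    {n : ℕ} (hn : Fintype.card B ≤ n) : t n = t (Fintype.card B) := by
  induction n, hn using Nat.le_induction with
  | base => rfl
  | succ n hn ih => rw [hadm.succ_eq_of_card_le hδ hJ hn, ih]

theorem mem_fst_succ_of_conj_mem_closure (hadm : BedardAdmissible cs δ J t)
    (hδ : δ '' Set.range cs.simple = Set.range cs.simple) (hJ : J ⊆ Set.range cs.simple)
    {n : ℕ} {x : W} (hx : x ∈ (t n).1)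
    (hconj : (t n).2⁻¹ * x * (t n).2 ∈ Subgroup.closure (δ '' (t n).1)) : x ∈ (t (n + 1)).1 := by
  obtain ⟨i, rfl⟩ := hJ (hadm.fst_subset n hx)
  rw [hadm.fst_succ]
  exact ⟨hx, _, (hadm.isMinInLeftCoset n).conj_simple_mem (hadm.image_fst_subset hδ hJ n) hconj,
    by group⟩

theorem mem_fst_of_conj_mem_closure (hadm : BedardAdmissible cs δ J t)
    (hδ : δ '' Set.range cs.simple = Set.range cs.simple) (hJ : J ⊆ Set.range cs.simple)
    (n : ℕ) {x : W} (hxJ : x ∈ J)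
    (hx : (t n).2⁻¹ * x * (t n).2 ∈ Subgroup.closure (δ '' (t n).1)) : x ∈ (t n).1 := by
  induction n with
  | zero => rwa [hadm.1]
  | succ n ih =>
    have hy := hadm.inv_mul_snd_succ_mem n
    have hxn : (t n).2⁻¹ * x * (t n).2 ∈ Subgroup.closure (δ '' (t n).1) := by
      rw [show (t n).2⁻¹ * x * (t n).2 = ((t n).2⁻¹ * (t (n + 1)).2) *
        ((t (n + 1)).2⁻¹ * x * (t (n + 1)).2) * ((t n).2⁻¹ * (t (n + 1)).2)⁻¹ by group]
      exact mul_mem (mul_mem hy (Subgroup.closure_mono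
        (Set.image_mono (hadm.fst_antitone n.le_succ)) hx)) (inv_mem hy)
    exact hadm.mem_fst_succ_of_conj_mem_closure hδ hJ (ih hxn) hxn

theorem length_lt_mul_snd (hadm : BedardAdmissible cs δ J t)
    (hδ : δ '' Set.range cs.simple = Set.range cs.simple) (hJ : J ⊆ Set.range cs.simple)
    (n : ℕ) {x : W} (hxJ : x ∈ J) : cs.length (t n).2 < cs.length (x * (t n).2) := by
  induction n with
  | zero => exact hadm.length_lt_mul_snd_of_mem_fst hJ (hadm.1 ▸ hxJ)
  | succ n ih =>
    obtain ⟨i, rfl⟩ := hJ hxJ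
    by_contra! hle
    have hlt : cs.length (cs.simple i * (t (n + 1)).2) < cs.length (t (n + 1)).2 :=
      lt_of_le_of_ne hle (cs.length_simple_mul_ne _ i)
    have hy := hadm.inv_mul_snd_succ_mem n
    have hconj := cs.conj_simple_mem_closure_of_length_lt (hadm.image_fst_subset hδ hJ n) hy
      (w := (t n).2) (i := i) (by rwa [mul_inv_cancel_left]) ih
    have hmem := hadm.mem_fst_succ_of_conj_mem_closure hδ hJ
      (hadm.mem_fst_of_conj_mem_closure hδ hJ n hxJ hconj) hconj
    exact absurd (hadm.length_lt_mul_snd_of_mem_fst hJ hmem) (not_lt.mpr hle)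

theorem eq_of_snd_card_eq [Fintype B]
    (hδ : δ '' Set.range cs.simple = Set.range cs.simple) (hJ : J ⊆ Set.range cs.simple)
    {t' : ℕ → Set W × W} (ht : BedardAdmissible cs δ J t) (ht' : BedardAdmissible cs δ J t')
    (h : (t (Fintype.card B)).2 = (t' (Fintype.card B)).2) : t = t' := by
  have hlimit {t : ℕ → Set W × W} (ht : BedardAdmissible cs δ J t) (n : ℕ) :
      (t n).2⁻¹ * (t (Fintype.card B)).2 ∈ Subgroup.closure (δ '' (t n).1) := by
    rw [← ht.eq_of_card_le hδ hJ (le_max_right n _)]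
    exact ht.inv_mul_snd_mem (le_max_left n _)
  have heq_of_fst_eq (n : ℕ) (hfst : (t n).1 = (t' n).1) : t n = t' n := by
    have hmin' := ht'.isMinInLeftCoset n
    have hlimit' := hlimit ht' n
    rw [← hfst] at hmin' hlimit'
    rw [← h] at hlimit'
    refine Prod.ext hfst ((ht.isMinInLeftCoset n).eq_of_inv_mul_mem
      (ht.image_fst_subset hδ hJ n) hmin' ?_)
    rw [show (t n).2⁻¹ * (t' n).2 = ((t n).2⁻¹ * (t (Fintype.card B)).2) *
      ((t' n).2⁻¹ * (t (Fintype.card B)).2)⁻¹ by group]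
    exact mul_mem (hlimit ht n) (inv_mem hlimit')
  funext n
  induction n with
  | zero => exact heq_of_fst_eq 0 (ht.1.trans ht'.1.symm)
  | succ n ih => exact heq_of_fst_eq (n + 1) (by rw [ht.fst_succ, ht'.fst_succ, ih])

theorem snd_eq_of_succ_eq [Finite B] (hadm : BedardAdmissible cs δ J t)
    (hδ : δ '' Set.range cs.simple = Set.range cs.simple) (hJ : J ⊆ Set.range cs.simple)
    {n : ℕ} (hn : t (n + 1) = t n) {v : W} (hv : ∀ x ∈ J, cs.length v < cs.length (x * v))
    (hmem : (t n).2⁻¹ * v ∈ Subgroup.closure (δ '' (t n).1)) : (t n).2 = v := by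
  have hS := hadm.image_fst_subset hδ hJ n
  have hconj_inj : Function.Injective fun x => (t n).2 * x * (t n).2⁻¹ := fun x y hxy => by
    simpa using hxy
  have hfst : (t n).1 = (fun x => (t n).2 * x * (t n).2⁻¹) '' (δ '' (t n).1) := by
    have hsub : (t n).1 ⊆ (fun x => (t n).2 * x * (t n).2⁻¹) '' (δ '' (t n).1) := fun x hx => by
      have hfix := hadm.fst_succ n
      rw [hn] at hfix
      rw [hfix] at hx
      exact hx.2
    refine Set.eq_of_subset_of_ncard_le hsub ?_ (((Set.finite_range _).subset hS).image _)
    rw [Set.ncard_image_of_injective _ hconj_inj, Set.ncard_image_of_injective _ δ.injective]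
  by_contra hne
  obtain ⟨x, hx, hlt⟩ :=
    cs.exists_length_mul_lt_of_mem_closure hS hmem (by rwa [Ne, inv_mul_eq_one])
  have hxJ : (t n).2 * x * (t n).2⁻¹ ∈ J := hadm.fst_subset n (hfst ▸ ⟨x, hx, rfl⟩)
  have h₁ := hv _ hxJ
  have h₂ := (hadm.isMinInLeftCoset n).length_mul hS hmem
  have h₃ := cs.length_mul_le (t n).2 (x * ((t n).2⁻¹ * v))
  rw [mul_inv_cancel_left] at h₂
  rw [show (t n).2 * (x * ((t n).2⁻¹ * v)) = (t n).2 * x * (t n).2⁻¹ * v by group] at h₃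
  omega

end BedardAdmissible

def bedardSets {W : Type*} [Group W] (δ : W ≃* W) (J : Set W) (F : Set W → W) : ℕ → Set W
  | 0 => J
  | n + 1 => bedardNext δ (bedardSets δ J F n) (F (bedardSets δ J F n))

theorem bedardAdmissible_bedardSets {B W : Type*} [Group W] {M : CoxeterMatrix B}
    (cs : CoxeterSystem M W) {δ : W ≃* W} (hδ : δ '' Set.range cs.simple = Set.range cs.simple)
    {J : Set W} (hJ : J ⊆ Set.range cs.simple) {v : W}
    (hv : ∀ x ∈ J, cs.length v < cs.length (x * v)) {F : Set W → W}
    (hF : ∀ K, cs.IsMinInLeftCoset (δ '' K) (F K) ∧ (F K)⁻¹ * v ∈ Subgroup.closure (δ '' K)) :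
    BedardAdmissible cs δ J fun n => (bedardSets δ J F n, F (bedardSets δ J F n)) := by
  set K := bedardSets δ J F
  have hKJ (n : ℕ) : K n ⊆ J := by
    induction n with
    | zero => exact subset_rfl
    | succ n ih => exact Set.inter_subset_left.trans ih
  have hKS (n : ℕ) : δ '' K n ⊆ Set.range cs.simple := hδ ▸ Set.image_mono ((hKJ n).trans hJ)
  refine ⟨rfl, fun n hn => ?_, fun n => ?_, fun n => (hF _).1, fun n hn => ?_⟩
  · obtain ⟨n, rfl⟩ := Nat.exists_eq_add_of_le' hn
    rfl
  · dsimp only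
    refine cs.isMinInRightCoset_of_forall_length_lt ((hKJ n).trans hJ) fun x hx => ?_
    obtain ⟨i, rfl⟩ := hJ (hKJ n hx)
    have h₁ := (hF (K n)).1.length_mul (hKS n) (hF (K n)).2
    have h₂ := cs.length_mul_le (cs.simple i * F (K n)) ((F (K n))⁻¹ * v)
    have := hv _ (hKJ n hx)
    have := cs.length_simple_mul_ne (F (K n)) i
    rw [mul_inv_cancel_left] at h₁
    rw [mul_assoc, mul_inv_cancel_left] at h₂
    omega
  · obtain ⟨n, rfl⟩ : ∃ k, n = k + 1 := ⟨n - 1, by omega⟩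
    refine ⟨1, one_mem _, (F (K n))⁻¹ * v * ((F (K (n + 1)))⁻¹ * v)⁻¹,
      mul_mem (hF _).2 (inv_mem (Subgroup.closure_mono ?_ (hF _).2)),
      by simp only [Nat.add_sub_cancel]; group⟩
    exact Set.image_mono Set.inter_subset_left

/-- Bédard's theorem (4.2(a),(b)): every admissible sequence is eventually constant from
`|S|` on, and `t ↦ w_∞` is a bijection from the set of admissible sequences onto
`ᴶW = {w : l(sw) > l(w) for all s ∈ J}`. -/
theorem bedard_bijection
    {B W : Type*} [Group W] [Fintype B] {M : CoxeterMatrix B} (cs : CoxeterSystem M W)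
    (δ : W ≃* W) (hδ : (⇑δ) '' Set.range cs.simple = Set.range cs.simple)
    (J : Set W) (hJ : J ⊆ Set.range cs.simple) :
    (∀ t : ℕ → Set W × W, BedardAdmissible cs δ J t →
      ∀ n : ℕ, Fintype.card B ≤ n → t (n + 1) = t n) ∧
    Set.BijOn (fun t : ℕ → Set W × W => (t (Fintype.card B)).2)
      {t | BedardAdmissible cs δ J t}
      {w : W | ∀ s ∈ J, cs.length w < cs.length (s * w)} := by
  refine ⟨fun t ht n hn => ht.succ_eq_of_card_le hδ hJ hn,
    fun t ht x hx => ht.length_lt_mul_snd hδ hJ _ hx,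
    fun t ht t' ht' h => BedardAdmissible.eq_of_snd_card_eq hδ hJ ht ht' h, fun v hv => ?_⟩
  choose F hF using fun K : Set W => cs.exists_isMinInLeftCoset (δ '' K) v
  have ht := bedardAdmissible_bedardSets cs hδ hJ hv hF
  exact ⟨fun n => (bedardSets δ J F n, F (bedardSets δ J F n)), ht,
    ht.snd_eq_of_succ_eq hδ hJ (ht.succ_eq_of_card_le hδ hJ le_rfl) hv (hF _).2⟩
end
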